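/- arXiv:1508.01570 — 5 statements merged into one kernel-verified Lean document; each statement's English description precedes it below -/
import Mathlib

section
/- Let V be a finite-dimensional real vector space with basis (b_i)_{i∈I} (I finite), let T : V → V be a linear map such that the coefficients K(i,j) defined by T(b_i) = Σ_{j∈I} K(i,j)·b_j are all non-negative, and let η : V → ℝ be a linear functional with η(b_i) > 0 for all i and η∘T = η. Let θ : V → V̄ be a surjective linear map onto a vector space V̄ such that the distinct elements of {θ(b_i) : i ∈ I} are linearly independent, and suppose there exist linear maps T̄ : V̄ → V̄ and η̄ : V̄ → ℝ with θ∘T = T̄∘θ and η̄∘θ = η. Define K̄ on the set of classes of the equivalence relation i ~ j ⇔ θ(b_i) = θ(b_j) by T̄(θ(b_i)) = Σ_{classes d} K̄([i],d)·θ(b_{j_d}) (j_d any representative of d). Then all entries of K̄ are non-negative, and for every i, j ∈ I: Σ_{j' : θ(b_{j'}) = θ(b_j)} K(i,j')·η(b_{j'})/η(b_i) = K̄([i],[j])·η̄(θ(b_j))/η̄(θ(b_i)); consequently this sum depends on i only through θ(b_i), so the Doob-transform chain K̂(i,j) := K(i,j)·η(b_j)/η(b_i) lumps strongly via i ↦ θ(b_i)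 to the Doob-transform chain of K̄ with rescaling η̄. -/
open Finset in
/-- **Strong lumping for Markov chains from linear maps** (quotient version).
`V` has basis `b i`, `T` has non-negative matrix `K` in this basis, `η` is a positive
harmonic functional, and `θ : V → V̄` is a surjective linear map such that the distinct
elements of `{θ (b i)}` are linearly independent and `T`, `η` descend to `T̄`, `η̄` on `V̄`.
If `K̄` is the matrix of `T̄` with respect to the (distinct) vectors `θ (b i)`, then `K̄` has
non-negative entries, and the Doob-transform chain of `K` lumps strongly via `i ↦ θ (b i)`
to the Doob-transform chain of `K̄`:
`∑_{j' : θ (b j') = θ (b j)} K i j' * η (b j') / η (b i) = K̄ (θ (b i)) (θ (b j)) * η̄ (θ (b j)) / η̄ (θ (b i))`. -/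
theorem strong_lumping_linear_map
    {I : Type*} [Fintype I] [DecidableEq I]
    {V Vbar : Type*} [AddCommGroup V] [Module ℝ V]
    [AddCommGroup Vbar] [Module ℝ Vbar] [DecidableEq Vbar]
    (b : Module.Basis I ℝ V)
    (T : V →ₗ[ℝ] V) (K : I → I → ℝ)
    (hTK : ∀ i, T (b i) = ∑ j, K i j • b j)
    (hKnonneg : ∀ i j, 0 ≤ K i j)
    (η : V →ₗ[ℝ] ℝ) (hηpos : ∀ i, 0 < η (b i)) (hηharm : ∀ v, η (T v) = η v)
    (θ : V →ₗ[ℝ] Vbar) (hθsurj : Function.Surjective θ)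
    (hindep : LinearIndependent ℝ ((↑) : Set.range (fun i => θ (b i)) → Vbar))
    (Tbar : Vbar →ₗ[ℝ] Vbar) (hTbar : ∀ v, θ (T v) = Tbar (θ v))
    (ηbar : Vbar →ₗ[ℝ] ℝ) (hηbar : ∀ v, ηbar (θ v) = η v)
    (Kbar : Vbar → Vbar → ℝ)
    (hKbar : ∀ i, Tbar (θ (b i))
      = ∑ w ∈ univ.image (fun j => θ (b j)), Kbar (θ (b i)) w • w) :
    (∀ i j : I, 0 ≤ Kbar (θ (b i)) (θ (b j))) ∧
    (∀ i j : I,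
      ∑ j' ∈ univ.filter (fun j' => θ (b j') = θ (b j)),
        K i j' * η (b j') / η (b i)
      = Kbar (θ (b i)) (θ (b j)) * ηbar (θ (b j)) / ηbar (θ (b i))) := by
  classical
  set S : Finset Vbar := univ.image (fun j => θ (b j)) with hS
  -- key coefficient identity
  have key : ∀ i j : I, Kbar (θ (b i)) (θ (b j))
      = ∑ j' ∈ univ.filter (fun j' => θ (b j') = θ (b j)), K i j' := by
    intro i j
    have h1 : θ (T (b i)) = ∑ w ∈ S, (∑ j' ∈ univ.filter (fun j' => θ (b j') = w), K i j') • w := by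
      rw [hTK i, map_sum]
      simp_rw [map_smul]
      rw [← Finset.sum_fiberwise_of_maps_to (g := fun j => θ (b j)) (t := S)
        (fun j _ => Finset.mem_image_of_mem _ (Finset.mem_univ j))]
      refine Finset.sum_congr rfl fun w _ => ?_
      rw [Finset.sum_smul]
      refine Finset.sum_congr rfl fun j' hj' => ?_
      rw [(Finset.mem_filter.mp hj').2]
    have h2 : θ (T (b i)) = ∑ w ∈ S, Kbar (θ (b i)) w • w := by
      rw [hTbar, hKbar]
    have h3 : ∑ w ∈ S, (Kbar (θ (b i)) w
        - ∑ j' ∈ univ.filter (fun j' => θ (b j') = w), K i j') • w = 0 := by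
      simp_rw [sub_smul, Finset.sum_sub_distrib, ← h1, ← h2, sub_self]
    -- use linear independence
    have hmem : ∀ w ∈ S, w ∈ Set.range (fun i => θ (b i)) := by
      intro w hw
      obtain ⟨j', _, rfl⟩ := Finset.mem_image.mp hw
      exact ⟨j', rfl⟩
    have hzero : ∀ w ∈ S, (Kbar (θ (b i)) w
        - ∑ j' ∈ univ.filter (fun j' => θ (b j') = w), K i j') = 0 := by
      intro w hw
      have hindep' := linearIndependent_iff'.mp hindep
      let t : Finset (Set.range fun i => θ (b i)) :=
        S.attach.image (fun x => (⟨x.1, hmem x.1 x.2⟩ : Set.range fun i => θ (b i)))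
      have hinj : ∀ x ∈ S.attach, ∀ y ∈ S.attach,
          (⟨x.1, hmem x.1 x.2⟩ : Set.range fun i => θ (b i)) = ⟨y.1, hmem y.1 y.2⟩ → x = y := by
        intro x _ y _ h
        rw [Subtype.mk.injEq] at h
        exact Subtype.ext h
      have hsum : ∑ x ∈ t, (fun u : Set.range fun i => θ (b i) =>
          Kbar (θ (b i)) u.1 - ∑ j' ∈ univ.filter (fun j' => θ (b j') = u.1), K i j') x • (x : Vbar)
          = 0 := by
        rw [Finset.sum_image hinj, Finset.sum_attach S
          (fun w => (Kbar (θ (b i)) w - ∑ j' ∈ univ.filter (fun j' => θ (b j') = w), K i j') • w)]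
        exact h3
      have := hindep' t _ hsum ⟨w, hmem w hw⟩
        (Finset.mem_image.mpr ⟨⟨w, hw⟩, Finset.mem_attach _ _, rfl⟩)
      exact this
    have := hzero (θ (b j)) (Finset.mem_image_of_mem _ (Finset.mem_univ j))
    linarith [this]
  constructor
  · intro i j
    rw [key i j]
    exact Finset.sum_nonneg fun j' _ => hKnonneg i j'
  · intro i j
    have hconst : ∀ j' ∈ univ.filter (fun j' => θ (b j') = θ (b j)),
        η (b j') = ηbar (θ (b j)) := by
      intro j' hj'
      rw [← hηbar (b j'), (Finset.mem_filter.mp hj').2]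
    calc ∑ j' ∈ univ.filter (fun j' => θ (b j') = θ (b j)), K i j' * η (b j') / η (b i)
        = (∑ j' ∈ univ.filter (fun j' => θ (b j') = θ (b j)), K i j') * ηbar (θ (b j)) / η (b i) := by
          rw [Finset.sum_mul, Finset.sum_div]
          exact Finset.sum_congr rfl fun j' hj' => by rw [hconst j' hj']
      _ = Kbar (θ (b i)) (θ (b j)) * ηbar (θ (b j)) / ηbar (θ (b i)) := by
          rw [← key i j, hηbar (b i)]
end

section
/- Let V be a finite-dimensional real vector space with basis (b_i)_{i∈I}, T : V → V linear with non-negative coefficients K(i,j) (defined by T(b_i) = Σ_j K(i,j)·b_j), and η : V → ℝ linear with η(b_i) > 0 for all i and η∘T = η. Let I = ⨿_{c∈C} I_c, x^c := Σ_{i∈I_c} b_i, and suppose T maps the span of {x^c} to itself, with K'(c,d) the matrix of the restriction (T(x^c) = Σ_d K'(c,d)·x^d). Set η'(c) := Σ_{i∈I_c} η(b_i), K̂(i,j) := K(i,j)·η(b_j)/η(b_i), K̂'(c,d) := K'(c,d)·η'(d)/η'(c), and let π^c be the distribution on I with π^c(j) = η(b_j)/η'(c) for j ∈ I_c and π^c(j)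 = 0 otherwise. Then each π^c is a probability distribution supported on I_c, K̂' is a transition matrix on C, and π^c·K̂ = Σ_{d∈C} K̂'(c,d)·π^d. Consequently, from any initial distribution of the form ν(i) = α_{c(i)}·η(b_i)/η'(c(i)) (where c(i) is the block containing i and α is a probability vector on C), one has Σ_{j∈I_d} (ν·K̂^t)(j) = (α·K̂'^t)_d for all t ≥ 0 and d ∈ C, i.e., the Doob chain of T lumps weakly via the block map to the Doob chain of its restriction to the span of {x^c}. -/
open Finset in
/-- **Weak lumping for Markov chains from linear maps** (subalgebra version).
`V` has basis `b i`, `T` has non-negative matrix `K`, `η` is a positive harmonic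
functional. The index set `I` is partitioned into the fibers of `blk : I → C`, the block
sums `x^c := ∑_{i : blk i = c} b i` span a `T`-invariant subspace, with
`T x^c = ∑_d K' c d • x^d`. With `η' c := ∑_{i : blk i = c} η (b i)`, the Doob transforms
`K̂ i j := K i j * η (b j) / η (b i)` and `K̂' c d := K' c d * η' d / η' c`, and the
distributions `π^c j := η (b j) / η' c` for `j` in block `c` (and `0` otherwise):
each `π^c` is a probability distribution supported on block `c`, `K̂'` is a transition
matrix, `π^c · K̂ = ∑_d K̂' c d · π^d`, and from any initial distribution
`ν i = α (blk i) * η (b i) / η' (blk i)` the chain `K̂` lumps weakly via `blk` to `K̂'`: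
`∑_{j : blk j = d} (ν · K̂^t) j = (α · K̂'^t) d`. -/
theorem weak_lumping_doob_subspace
    {I C : Type*} [Fintype I] [DecidableEq I] [Fintype C] [DecidableEq C]
    {V : Type*} [AddCommGroup V] [Module ℝ V]
    (b : Module.Basis I ℝ V)
    (T : V →ₗ[ℝ] V) (K : I → I → ℝ)
    (hTK : ∀ i, T (b i) = ∑ j, K i j • b j)
    (hKnonneg : ∀ i j, 0 ≤ K i j)
    (η : V →ₗ[ℝ] ℝ) (hηpos : ∀ i, 0 < η (b i)) (hηharm : ∀ v, η (T v) = η v)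
    (blk : I → C) (hblk : Function.Surjective blk)
    (x : C → V) (hx : ∀ c, x c = ∑ i ∈ univ.filter (fun i => blk i = c), b i)
    (K' : C → C → ℝ) (hK' : ∀ c, T (x c) = ∑ d, K' c d • x d)
    (η' : C → ℝ) (hη' : ∀ c, η' c = ∑ i ∈ univ.filter (fun i => blk i = c), η (b i))
    (Khat : Matrix I I ℝ) (hKhat : ∀ i j, Khat i j = K i j * η (b j) / η (b i))
    (Khat' : Matrix C C ℝ) (hKhat' : ∀ c d, Khat' c d = K' c d * η' d / η' c)
    (π : C → I → ℝ)
    (hπ : ∀ c j, π c j = if blk j = c then η (b j) / η' c else 0) :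
    (∀ c, (∀ j, 0 ≤ π c j) ∧ (∑ j, π c j = 1) ∧ (∀ j, π c j ≠ 0 → blk j = c)) ∧
    (∀ c d, 0 ≤ Khat' c d) ∧
    (∀ c, ∑ d, Khat' c d = 1) ∧
    (∀ (c : C) (j : I), ∑ i, π c i * Khat i j = ∑ d, Khat' c d * π d j) ∧
    (∀ α : C → ℝ, (∀ c, 0 ≤ α c) → ∑ c, α c = 1 →
      ∀ (t : ℕ) (d : C),
        ∑ j ∈ univ.filter (fun j => blk j = d),
            (∑ i, (α (blk i) * η (b i) / η' (blk i)) * (Khat ^ t) i j)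
          = ∑ c, α c * (Khat' ^ t) c d) := by

  classical
  have hη'pos : ∀ c, 0 < η' c := by
    intro c
    obtain ⟨i, hi⟩ := hblk c
    rw [hη']
    exact Finset.sum_pos (fun j _ => hηpos j) ⟨i, by simp [hi]⟩
  have hrow : ∀ i, ∑ j, K i j * η (b j) = η (b i) := by
    intro i
    have h := hηharm (b i)
    rw [hTK, map_sum] at h
    simpa [smul_eq_mul] using h
  have hηx : ∀ c, η (x c) = η' c := by
    intro c; rw [hx, hη', map_sum]
  have hK'row : ∀ c, ∑ d, K' c d * η' d = η' c := by
    intro c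
    have h := hηharm (x c)
    rw [hK', map_sum] at h
    simp only [map_smul, smul_eq_mul, hηx] at h
    exact h
  have hK'coord : ∀ c j, K' c (blk j) = ∑ i ∈ univ.filter (fun i => blk i = c), K i j := by
    intro c j
    have h := congrArg (b.coord j) (hK' c)
    simp only [hx, hTK, map_sum, map_smul, smul_eq_mul, Module.Basis.coord_apply,
      Module.Basis.repr_self, Finsupp.single_apply, mul_ite, mul_one, mul_zero,
      Finset.sum_ite_eq, Finset.sum_ite_eq', Finset.mem_univ, Finset.mem_filter,
      if_true, true_and] at h
    exact h.symm
  have hK'nonneg : ∀ c d, 0 ≤ K' c d := by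
    intro c d
    obtain ⟨j, rfl⟩ := hblk d
    rw [hK'coord]
    exact Finset.sum_nonneg fun i _ => hKnonneg i j
  have hπsum : ∀ c, ∑ j, π c j = 1 := by
    intro c
    have : ∑ j, π c j = ∑ j ∈ univ.filter (fun j => blk j = c), η (b j) / η' c := by
      rw [Finset.sum_filter]
      exact Finset.sum_congr rfl fun j _ => by rw [hπ]
    rw [this, ← Finset.sum_div, ← hη', div_self (hη'pos c).ne']
  have hblksum : ∀ (c d : C) , ∑ j ∈ univ.filter (fun j => blk j = d), π c j
      = if c = d then 1 else 0 := by
    intro c d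
    by_cases hcd : c = d
    · subst hcd
      rw [if_pos rfl, ← hπsum c]
      apply Finset.sum_subset (Finset.filter_subset _ _)
      intro j _ hj
      rw [Finset.mem_filter] at hj
      rw [hπ, if_neg (fun h => hj ⟨Finset.mem_univ j, h⟩)]
    · simp only [if_neg hcd]
      apply Finset.sum_eq_zero
      intro j hj
      rw [Finset.mem_filter] at hj
      rw [hπ, if_neg (by rw [hj.2]; exact fun h => hcd h.symm)]
  have hinter : ∀ (c : C) (j : I), ∑ i, π c i * Khat i j = ∑ d, Khat' c d * π d j := by
    intro c j
    have hL : ∑ i, π c i * Khat i j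
        = K' c (blk j) * η (b j) / η' c := by
      simp only [hπ, hKhat, ite_mul, zero_mul]
      rw [← Finset.sum_filter, hK'coord, Finset.sum_mul, Finset.sum_div]
      apply Finset.sum_congr rfl
      intro i _
      have h1 := (hηpos i).ne'
      have h2 := (hη'pos c).ne'
      field_simp
    have hR : ∑ d, Khat' c d * π d j = K' c (blk j) * η (b j) / η' c := by
      rw [Finset.sum_congr rfl (fun d _ => by rw [hπ, hKhat'])]
      rw [Finset.sum_eq_single (blk j)]
      · rw [if_pos rfl]
        have h1 := (hη'pos (blk j)).ne'
        have h2 := (hη'pos c).ne'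
        field_simp
      · intro d _ hd
        rw [if_neg (fun h => hd h.symm), mul_zero]
      · intro h; exact absurd (Finset.mem_univ _) h
    rw [hL, hR]
  have main : ∀ (α : C → ℝ) (t : ℕ) (j : I),
      ∑ i, (α (blk i) * η (b i) / η' (blk i)) * (Khat ^ t) i j
        = ∑ c, (∑ e, α e * (Khat' ^ t) e c) * π c j := by
    intro α t
    induction t with
    | zero =>
      intro j
      simp only [pow_zero, Matrix.one_apply]
      rw [Finset.sum_eq_single j, Finset.sum_eq_single (blk j)]
      · rw [Finset.sum_eq_single (blk j)]
        · simp [hπ, mul_div_assoc]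
        · intro e _ he; simp [he]
        · simp
      · intro c _ hc
        rw [hπ, if_neg (fun h => hc h.symm), mul_zero]
      · simp
      · intro i _ hi; simp [hi]
      · simp
    | succ t ih =>
      intro j
      have hpow : ∀ i, (Khat ^ (t+1)) i j = ∑ k, (Khat ^ t) i k * Khat k j := by
        intro i; rw [pow_succ, Matrix.mul_apply]
      calc ∑ i, (α (blk i) * η (b i) / η' (blk i)) * (Khat ^ (t+1)) i j
          = ∑ k, (∑ i, (α (blk i) * η (b i) / η' (blk i)) * (Khat ^ t) i k) * Khat k j := by
            simp only [hpow, Finset.mul_sum]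
            rw [Finset.sum_comm]
            apply Finset.sum_congr rfl; intro k _
            rw [Finset.sum_mul]
            exact Finset.sum_congr rfl fun i _ => (mul_assoc _ _ _).symm
        _ = ∑ k, (∑ c, (∑ e, α e * (Khat' ^ t) e c) * π c k) * Khat k j := by
            simp only [ih]
        _ = ∑ c, (∑ e, α e * (Khat' ^ t) e c) * (∑ k, π c k * Khat k j) := by
            have hstep : ∀ k, (∑ c, (∑ e, α e * (Khat' ^ t) e c) * π c k) * Khat k j
                = ∑ c, (∑ e, α e * (Khat' ^ t) e c) * (π c k * Khat k j) := by
              intro k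
              rw [Finset.sum_mul]
              exact Finset.sum_congr rfl fun c _ => by ring
            simp only [hstep]
            rw [Finset.sum_comm]
            exact Finset.sum_congr rfl fun c _ => (Finset.mul_sum _ _ _).symm
        _ = ∑ c, (∑ e, α e * (Khat' ^ t) e c) * (∑ d, Khat' c d * π d j) := by
            simp only [hinter]
        _ = ∑ d, (∑ e, α e * (Khat' ^ (t+1)) e d) * π d j := by
            simp only [pow_succ, Matrix.mul_apply, Finset.mul_sum, Finset.sum_mul]
            rw [Finset.sum_comm]
            apply Finset.sum_congr rfl; intro d _
            rw [Finset.sum_comm]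
            apply Finset.sum_congr rfl; intro c _
            apply Finset.sum_congr rfl; intro e _
            ring
  refine ⟨?_, ?_, ?_, hinter, ?_⟩
  · intro c
    refine ⟨?_, hπsum c, ?_⟩
    · intro j
      rw [hπ]
      split
      · exact div_nonneg (hηpos j).le (hη'pos c).le
      · exact le_refl 0
    · intro j hj
      by_contra h
      exact hj (by rw [hπ, if_neg h])
  · intro c d
    rw [hKhat']
    exact div_nonneg (mul_nonneg (hK'nonneg c d) (hη'pos d).le) (hη'pos c).le
  · intro c
    have : ∑ d, Khat' c d = (∑ d, K' c d * η' d) / η' c := by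
      rw [Finset.sum_div]
      exact Finset.sum_congr rfl fun d _ => hKhat' c d
    rw [this, hK'row, div_self (hη'pos c).ne']
  · intro α hα hαsum t d
    have := main α t
    calc ∑ j ∈ univ.filter (fun j => blk j = d),
          ∑ i, (α (blk i) * η (b i) / η' (blk i)) * (Khat ^ t) i j
        = ∑ j ∈ univ.filter (fun j => blk j = d),
            ∑ c, (∑ e, α e * (Khat' ^ t) e c) * π c j := by
          exact Finset.sum_congr rfl fun j _ => this j
      _ = ∑ c, (∑ e, α e * (Khat' ^ t) e c) *
            (∑ j ∈ univ.filter (fun j => blk j = d), π c j) := by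
          rw [Finset.sum_comm]
          exact Finset.sum_congr rfl fun c _ => by rw [Finset.mul_sum]
      _ = ∑ c, α c * (Khat' ^ t) c d := by
          simp only [hblksum, mul_ite, mul_one, mul_zero, Finset.sum_ite_eq',
            Finset.mem_univ, if_true]
end

section
/- For every n ≥ 1, every t ≥ 0 and every σ ∈ S_n, the t-step transition probability from the identity permutation e to σ is the same for the bottom-to-random-with-standardisation chain and the bottom-to-random shuffle: (K_std^t)(e,σ) = (K_btr^t)(e,σ). -/
/-- The one-line notation word of a permutation `σ ∈ S_n`, as the list
`(σ(1), …, σ(n))` of letters in `{1, …, n}`. -/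
def word (n : ℕ) (σ : Equiv.Perm (Fin n)) : List ℕ :=
  List.ofFn fun p => (σ p : ℕ) + 1

/-- The bottom-to-random shuffle transition matrix on `S_n`:
`K_btr σ τ = (1/n) · #{k ∈ {1,…,n} : deleting the last letter of σ and re-inserting it
so that it becomes the k-th letter yields τ}`. -/
noncomputable def Kbtr (n : ℕ) : Matrix (Equiv.Perm (Fin n)) (Equiv.Perm (Fin n)) ℝ :=
  fun σ τ =>
    ((Finset.univ.filter fun k : Fin n =>
      (word n σ).dropLast.insertIdx (k : ℕ) ((word n σ).getLastD 0) = word n τ).card : ℝ) / n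

/-- The bottom-to-random-with-standardisation transition matrix on `S_n`: from `σ`,
delete the last letter `i`, relabel every remaining letter `j > i` as `j - 1`, and insert
the letter `n` so that it becomes the `k`-th letter; `K_std σ τ` is `1/n` times the
number of `k ∈ {1, …, n}` for which the result is the word of `τ`. -/
noncomputable def Kstd (n : ℕ) : Matrix (Equiv.Perm (Fin n)) (Equiv.Perm (Fin n)) ℝ :=
  fun σ τ =>
    ((Finset.univ.filter fun k : Fin n =>
      ((word n σ).dropLast.map fun j =>
          if (word n σ).getLastD 0 < j then j - 1 else j).insertIdx (k : ℕ) n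
        = word n τ).card : ℝ) / n


namespace BTR

variable {m : ℕ}

def cyc (k : Fin (m+1)) : Equiv.Perm (Fin (m+1)) where
  toFun x := ⟨if (x:ℕ) = k then m else if (k:ℕ) < x then (x:ℕ)-1 else x,
    by have := x.isLt; have := k.isLt; split_ifs <;> omega⟩
  invFun y := ⟨if (y:ℕ) = m then k else if (k:ℕ) ≤ y then (y:ℕ)+1 else y,
    by have := y.isLt; have := k.isLt; split_ifs <;> omega⟩
  left_inv := by
    intro x; have hx := x.isLt; have hk := k.isLt
    apply Fin.ext; simp only [Fin.val_mk]; split_ifs <;> omega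
  right_inv := by
    intro y; have hy := y.isLt; have hk := k.isLt
    apply Fin.ext; simp only [Fin.val_mk]; split_ifs <;> omega

lemma cyc_coe (k x : Fin (m+1)) :
    (cyc k x : ℕ) = if (x:ℕ) = k then m else if (k:ℕ) < x then (x:ℕ) - 1 else x := rfl

lemma cyc_self (k : Fin (m+1)) : cyc k k = Fin.last m := by
  apply Fin.ext; rw [cyc_coe]; simp [Fin.val_last]

lemma word_length (σ : Equiv.Perm (Fin (m+1))) : (word (m+1) σ).length = m+1 := by
  simp [word]

lemma word_getElem (σ : Equiv.Perm (Fin (m+1))) (i : ℕ) (h : i < m+1) :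
    (word (m+1) σ)[i]'(by rw [word_length]; exact h) = (σ ⟨i, h⟩ : ℕ) + 1 := by
  show (List.ofFn fun p => (σ p : ℕ) + 1)[i]'_ = _
  exact List.getElem_ofFn _

lemma dropLast_length (σ : Equiv.Perm (Fin (m+1))) : (word (m+1) σ).dropLast.length = m := by
  simp [word_length]

lemma dropLast_getElem (σ : Equiv.Perm (Fin (m+1))) (i : ℕ) (h : i < m) :
    (word (m+1) σ).dropLast[i]'(by rw [dropLast_length]; exact h)
      = (σ ⟨i, by omega⟩ : ℕ) + 1 := by
  rw [List.getElem_dropLast, word_getElem]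

lemma word_getLastD (σ : Equiv.Perm (Fin (m+1))) :
    (word (m+1) σ).getLastD 0 = (σ (Fin.last m) : ℕ) + 1 := by
  have h : word (m+1) σ ≠ [] := by
    intro hc; have := word_length σ; rw [hc] at this; simp at this
  rw [List.getLastD_eq_getLast?, List.getLast?_eq_getLast h, Option.getD_some,
    List.getLast_eq_getElem]
  have := word_getElem σ m (by omega)
  simp only [word_length, Nat.add_sub_cancel]
  exact this

lemma word_injective (σ τ : Equiv.Perm (Fin (m+1))) (h : word (m+1) σ = word (m+1) τ) :
    σ = τ := by
  ext p
  have h1 := word_getElem σ p p.isLt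
  have h2 := word_getElem τ p p.isLt
  simp only [h, h2] at h1
  simp only [Fin.eta] at h1 h2 ⊢
  omega

/-- key word lemma for the bottom-to-random matrix -/
lemma btr_word (σ : Equiv.Perm (Fin (m+1))) (k : Fin (m+1)) :
    (word (m+1) σ).dropLast.insertIdx (k : ℕ) ((word (m+1) σ).getLastD 0)
      = word (m+1) (σ * cyc k) := by
  have hk : (k:ℕ) ≤ (word (m+1) σ).dropLast.length := by rw [dropLast_length]; omega
  apply List.ext_getElem
  · rw [List.length_insertIdx_of_le_length hk, dropLast_length, word_length]
  · intro i h1 h2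
    rw [word_length] at h2
    rw [word_getElem _ i h2]
    have hcyc : ((σ * cyc k) ⟨i, h2⟩ : ℕ) = (σ (cyc k ⟨i, h2⟩) : ℕ) := rfl
    rw [Equiv.Perm.mul_apply] at hcyc
    rcases Nat.lt_trichotomy i (k:ℕ) with hik | hik | hik
    · rw [List.getElem_insertIdx_of_lt hik h1]
      rw [dropLast_getElem σ i (by have := k.isLt; omega)]
      have hc : cyc k ⟨i, h2⟩ = ⟨i, h2⟩ :=
        Fin.ext (by rw [cyc_coe]; simp only [Fin.val_mk]; split_ifs <;> omega)
      rw [Equiv.Perm.mul_apply, hc]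
    · subst hik
      rw [List.getElem_insertIdx_self h1, word_getLastD]
      have hc : cyc k ⟨(k:ℕ), h2⟩ = Fin.last m :=
        Fin.ext (by rw [cyc_coe]; simp only [Fin.val_mk, Fin.val_last]; split_ifs <;> omega)
      rw [Equiv.Perm.mul_apply, hc]
    · have h3 : (k:ℕ) + (i - (k:ℕ) - 1) < (word (m+1) σ).dropLast.length := by
        rw [dropLast_length]; omega
      have key := List.getElem_insertIdx_add_succ (word (m+1) σ).dropLast
        ((word (m+1) σ).getLastD 0) (k:ℕ) (i - (k:ℕ) - 1) h3
      have hi : (k:ℕ) + (i - (k:ℕ) - 1) + 1 = i := by omega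
      simp only [hi] at key
      rw [key, dropLast_getElem σ _ (by rw [dropLast_length] at h3; exact h3)]
      have hc : cyc k ⟨i, h2⟩ = ⟨(k:ℕ) + (i - (k:ℕ) - 1), by omega⟩ :=
        Fin.ext (by rw [cyc_coe]; simp only [Fin.val_mk]; split_ifs <;> omega)
      rw [Equiv.Perm.mul_apply, hc]


lemma cyc_ne (k : Fin (m+1)) {x : Fin (m+1)} (h : x ≠ k) : cyc k x < Fin.last m := by
  have hx := x.isLt; have hk := k.isLt
  have h' : (x:ℕ) ≠ k := fun hc => h (Fin.ext hc)
  rw [Fin.lt_def, cyc_coe]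
  simp only [Fin.val_last]
  split_ifs <;> omega

lemma cyc_eq_last_iff (k x : Fin (m+1)) : cyc k x = Fin.last m ↔ x = k := by
  constructor
  · intro h; by_contra hc; exact absurd h (cyc_ne k hc).ne
  · rintro rfl; exact cyc_self _

lemma cyc_le_iff {k x y : Fin (m+1)} (hx : x ≠ k) (hy : y ≠ k) :
    cyc k x ≤ cyc k y ↔ x ≤ y := by
  have hx' : (x:ℕ) ≠ k := fun hc => hx (Fin.ext hc)
  have hy' : (y:ℕ) ≠ k := fun hc => hy (Fin.ext hc)
  have h1 := x.isLt; have h2 := y.isLt; have h3 := k.isLt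
  rw [Fin.le_def, Fin.le_def, cyc_coe, cyc_coe]
  split_ifs <;> omega

lemma cyc_of_lt {k x : Fin (m+1)} (h : x < k) : cyc k x = x := by
  have h' := Fin.lt_def.mp h
  apply Fin.ext
  rw [cyc_coe]
  split_ifs <;> omega



lemma map_getElem (σ : Equiv.Perm (Fin (m+1))) (i : ℕ) (h : i < m)
    (f : ℕ → ℕ) :
    ((word (m+1) σ).dropLast.map f)[i]'(by rw [List.length_map, dropLast_length]; exact h)
      = f ((σ ⟨i, by omega⟩ : ℕ) + 1) := by
  rw [List.getElem_map, dropLast_getElem σ i h]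

lemma cyc_val_succ (a v : Fin (m+1)) (hv : v ≠ a) :
    (if (a:ℕ) + 1 < (v:ℕ) + 1 then (v:ℕ) + 1 - 1 else (v:ℕ) + 1) = (cyc a v : ℕ) + 1 := by
  have hv' : (v:ℕ) ≠ a := fun hc => hv (Fin.ext hc)
  have := v.isLt; have := a.isLt
  rw [cyc_coe]
  split_ifs <;> omega

/-- key word lemma for the std matrix -/
lemma std_word (σ : Equiv.Perm (Fin (m+1))) (k : Fin (m+1)) :
    ((word (m+1) σ).dropLast.map fun j =>
        if (word (m+1) σ).getLastD 0 < j then j - 1 else j).insertIdx (k : ℕ) (m+1)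
      = word (m+1) (cyc (σ (Fin.last m)) * σ * cyc k) := by
  set a := σ (Fin.last m) with ha
  have hlen : ((word (m+1) σ).dropLast.map fun j =>
      if (word (m+1) σ).getLastD 0 < j then j - 1 else j).length = m := by
    rw [List.length_map, dropLast_length]
  have hk : (k:ℕ) ≤ m := by have := k.isLt; omega
  apply List.ext_getElem
  · rw [List.length_insertIdx_of_le_length (by rw [hlen]; exact hk), hlen, word_length]
  · intro i h1 h2
    rw [word_length] at h2
    rw [word_getElem _ i h2]
    rcases Nat.lt_trichotomy i (k:ℕ) with hik | hik | hik
    · rw [List.getElem_insertIdx_of_lt hik h1]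
      rw [map_getElem σ i (by have := k.isLt; omega)]
      simp only [word_getLastD]
      have hc : cyc k ⟨i, h2⟩ = ⟨i, h2⟩ :=
        Fin.ext (by rw [cyc_coe]; simp only [Fin.val_mk]; split_ifs <;> omega)
      simp only [Equiv.Perm.mul_apply, hc]
      apply cyc_val_succ
      intro hc2
      have hlast : (⟨i, h2⟩ : Fin (m+1)) = Fin.last m := σ.injective (by rw [hc2])
      have := congrArg Fin.val hlast
      simp only [Fin.val_last, Fin.val_mk] at this
      omega
    · subst hik
      rw [List.getElem_insertIdx_self h1]
      have hc : cyc k ⟨(k:ℕ), h2⟩ = Fin.last m :=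
        Fin.ext (by rw [cyc_coe]; simp only [Fin.val_mk, Fin.val_last]; split_ifs <;> omega)
      simp only [Equiv.Perm.mul_apply, hc, ← ha, cyc_self, Fin.val_last]
    · have h3 : (k:ℕ) + (i - (k:ℕ) - 1) < ((word (m+1) σ).dropLast.map fun j =>
          if (word (m+1) σ).getLastD 0 < j then j - 1 else j).length := by
        rw [hlen]; omega
      have key := List.getElem_insertIdx_add_succ _ (m+1) (k:ℕ) (i - (k:ℕ) - 1) h3
      have hi : (k:ℕ) + (i - (k:ℕ) - 1) + 1 = i := by omega
      simp only [hi] at key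
      rw [key, map_getElem σ _ (by rw [hlen] at h3; exact h3)]
      simp only [word_getLastD]
      have hc : cyc k ⟨i, h2⟩ = ⟨(k:ℕ) + (i - (k:ℕ) - 1), by omega⟩ :=
        Fin.ext (by rw [cyc_coe]; simp only [Fin.val_mk]; split_ifs <;> omega)
      simp only [Equiv.Perm.mul_apply, hc]
      apply cyc_val_succ
      intro hc2
      have hlast : (⟨(k:ℕ) + (i - (k:ℕ) - 1), by omega⟩ : Fin (m+1)) = Fin.last m :=
        σ.injective (by rw [hc2])
      have := congrArg Fin.val hlast
      simp only [Fin.val_last, Fin.val_mk] at this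
      omega




/-- values `0,…,c-1` appear in increasing order of positions in the word of `σ`. -/
def Inc (σ : Equiv.Perm (Fin (m+1))) (c : ℕ) : Prop :=
  ∀ i j : Fin (m+1), (i:ℕ) < c → (j:ℕ) < c → i ≤ j → σ⁻¹ i ≤ σ⁻¹ j

instance (σ : Equiv.Perm (Fin (m+1))) (c : ℕ) : Decidable (Inc σ c) := by
  unfold Inc; infer_instance

/-- the statistic: largest `c` such that values `0,…,c-1` are in increasing order. -/
def Mst (σ : Equiv.Perm (Fin (m+1))) : ℕ := Nat.findGreatest (Inc σ) (m+1)

lemma inc_one (σ : Equiv.Perm (Fin (m+1))) : Inc σ 1 := by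
  intro i j hi hj _
  have : i = j := Fin.ext (by omega)
  rw [this]

lemma inc_anti {σ : Equiv.Perm (Fin (m+1))} {c d : ℕ} (h : Inc σ c) (hdc : d ≤ c) :
    Inc σ d := fun i j hi hj hij => h i j (by omega) (by omega) hij

lemma Mst_le (σ : Equiv.Perm (Fin (m+1))) : Mst σ ≤ m+1 := Nat.findGreatest_le _

lemma Mst_pos (σ : Equiv.Perm (Fin (m+1))) : 1 ≤ Mst σ :=
  Nat.le_findGreatest (by omega) (inc_one σ)

lemma inc_Mst (σ : Equiv.Perm (Fin (m+1))) : Inc σ (Mst σ) :=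
  Nat.findGreatest_spec (P := Inc σ) (by omega) (inc_one σ)

lemma not_inc_of_Mst_lt {σ : Equiv.Perm (Fin (m+1))} {c : ℕ} (h1 : Mst σ < c)
    (h2 : c ≤ m+1) : ¬ Inc σ c :=
  Nat.findGreatest_is_greatest h1 h2

lemma Mst_unique {σ : Equiv.Perm (Fin (m+1))} {c : ℕ} (h1 : Inc σ c) (h2 : c ≤ m+1)
    (h3 : c = m+1 ∨ ¬ Inc σ (c+1)) : Mst σ = c := by
  have hle : c ≤ Mst σ := Nat.le_findGreatest h2 h1
  rcases Nat.lt_or_ge c (Mst σ) with h | h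
  · exfalso
    rcases h3 with rfl | h3
    · have := Mst_le σ; omega
    · exact h3 (inc_anti (inc_Mst σ) (by omega))
  · omega

lemma Mkey (σ τ : Equiv.Perm (Fin (m+1))) (a : Fin (m+1))
    (h1 : τ⁻¹ a = Fin.last m)
    (h2 : ∀ v : Fin (m+1), v ≠ a → τ⁻¹ v ≠ Fin.last m)
    (h3 : ∀ v w : Fin (m+1), (v:ℕ) < a → (w:ℕ) < a → (τ⁻¹ v ≤ τ⁻¹ w ↔ σ⁻¹ v ≤ σ⁻¹ w)) :
    Mst τ = if (a:ℕ) ≤ Mst σ then (a:ℕ) + 1 else Mst σ := by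
  have ha := a.isLt
  have hlt : ∀ v : Fin (m+1), v ≠ a → τ⁻¹ v < Fin.last m := by
    intro v hv
    exact lt_of_le_of_ne (Fin.le_last _) (h2 v hv)
  have hval : ∀ v : Fin (m+1), (v:ℕ) < (a:ℕ) → v ≠ a := by
    intro v hv hc; rw [hc] at hv; omega
  split_ifs with hcase
  · -- a ≤ Mst σ, result a+1
    apply Mst_unique
    · intro i j hi hj hij
      by_cases hja : j = a
      · rw [hja, h1]; exact Fin.le_last _
      · have hj' : (j:ℕ) < a := by
          have : (j:ℕ) ≠ (a:ℕ) := fun hc => hja (Fin.ext hc)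
          omega
        have hi' : (i:ℕ) < a := by have := Fin.le_def.mp hij; omega
        rw [h3 i j hi' hj']
        exact inc_Mst σ i j (by omega) (by omega) hij
    · omega
    · by_cases ham : (a:ℕ) = m
      · left; omega
      · right
        intro hc
        have hlast : (⟨(a:ℕ)+1, by omega⟩ : Fin (m+1)) ≠ a := by
          intro h; have := congrArg Fin.val h; simp only [Fin.val_mk] at this; omega
        have := hc a ⟨(a:ℕ)+1, by omega⟩ (by omega) (by simp only [Fin.val_mk]; omega)
          (by rw [Fin.le_def]; simp only [Fin.val_mk]; omega)
        rw [h1] at this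
        exact absurd (le_antisymm (Fin.le_last _) this) (h2 _ hlast)
  · -- a > Mst σ, result Mst σ
    push_neg at hcase
    have hM := Mst_pos σ
    apply Mst_unique
    · intro i j hi hj hij
      rw [h3 i j (by omega) (by omega)]
      exact inc_Mst σ i j hi hj hij
    · have := Mst_le σ; omega
    · right
      intro hc
      have hninc : ¬ Inc σ (Mst σ + 1) := not_inc_of_Mst_lt (by omega) (by omega)
      apply hninc
      intro i j hi hj hij
      rw [← h3 i j (by omega) (by omega)]
      exact hc i j hi hj hij

lemma Mst_eq_top_iff (σ : Equiv.Perm (Fin (m+1))) : Mst σ = m+1 ↔ σ = 1 := by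
  constructor
  · intro h
    have hinc : Inc σ (m+1) := by rw [← h]; exact inc_Mst σ
    have hmono : Monotone (σ⁻¹ : Equiv.Perm (Fin (m+1))) := by
      intro i j hij
      exact hinc i j i.isLt j.isLt hij
    have hsm : StrictMono (σ⁻¹ : Equiv.Perm (Fin (m+1))) :=
      hmono.strictMono_of_injective (σ⁻¹).injective
    let e : Fin (m+1) ≃o Fin (m+1) := ⟨(σ⁻¹ : Equiv.Perm (Fin (m+1))), by
      intro a b; exact hsm.le_iff_le⟩
    have he : e = OrderIso.refl (Fin (m+1)) := Subsingleton.elim _ _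
    have h2 : (σ⁻¹ : Equiv.Perm (Fin (m+1))) = 1 := by
      ext i
      have : e i = i := by rw [he]; rfl
      exact congrArg Fin.val this
    exact inv_eq_one.mp h2
  · rintro rfl
    apply Mst_unique
    · intro i j _ _ hij; simpa using hij
    · exact le_refl _
    · exact Or.inl rfl

lemma Mst_mul_cyc_inv (σ : Equiv.Perm (Fin (m+1))) (k : Fin (m+1)) :
    Mst (σ * (cyc k)⁻¹) = if (σ k : ℕ) ≤ Mst σ then (σ k : ℕ) + 1 else Mst σ := by
  apply Mkey
  · show ((σ * (cyc k)⁻¹)⁻¹) (σ k) = Fin.last m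
    simp only [mul_inv_rev, inv_inv, Equiv.Perm.mul_apply, Equiv.Perm.coe_inv, Equiv.symm_apply_apply]
    exact cyc_self k
  · intro v hv
    show ((σ * (cyc k)⁻¹)⁻¹) v ≠ Fin.last m
    simp only [mul_inv_rev, inv_inv, Equiv.Perm.mul_apply]
    have : σ⁻¹ v ≠ k := by
      intro hc
      apply hv
      rw [← hc, (Equiv.Perm.eq_inv_iff_eq.mp rfl)]
    exact (cyc_ne k this).ne
  · intro v w hv hw
    show ((σ * (cyc k)⁻¹)⁻¹) v ≤ ((σ * (cyc k)⁻¹)⁻¹) w ↔ _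
    simp only [mul_inv_rev, inv_inv, Equiv.Perm.mul_apply]
    have h1 : σ⁻¹ v ≠ k := by
      intro hc
      have : v = σ k := by rw [← hc, (Equiv.Perm.eq_inv_iff_eq.mp rfl)]
      rw [this] at hv; omega
    have h2 : σ⁻¹ w ≠ k := by
      intro hc
      have : w = σ k := by rw [← hc, (Equiv.Perm.eq_inv_iff_eq.mp rfl)]
      rw [this] at hw; omega
    exact cyc_le_iff h1 h2

lemma Mst_std_preimage (σ : Equiv.Perm (Fin (m+1))) (a : Fin (m+1)) :
    Mst ((cyc a)⁻¹ * σ * (cyc (σ⁻¹ (Fin.last m)))⁻¹)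
      = if (a : ℕ) ≤ Mst σ then (a : ℕ) + 1 else Mst σ := by
  set k₀ := σ⁻¹ (Fin.last m) with hk₀
  have hinv : ((cyc a)⁻¹ * σ * (cyc k₀)⁻¹)⁻¹ = cyc k₀ * σ⁻¹ * cyc a := by
    simp [mul_inv_rev, mul_assoc]
  apply Mkey
  · rw [hinv]
    simp only [Equiv.Perm.mul_apply, cyc_self, ← hk₀]
  · intro v hv
    rw [hinv]
    simp only [Equiv.Perm.mul_apply]
    have h1 : cyc a v ≠ Fin.last m := by
      intro hc; exact hv ((cyc_eq_last_iff a v).mp hc)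
    have h2 : σ⁻¹ (cyc a v) ≠ k₀ := by
      intro hc
      apply h1
      have := congrArg σ hc
      rw [(Equiv.Perm.eq_inv_iff_eq.mp rfl), hk₀, (Equiv.Perm.eq_inv_iff_eq.mp rfl)] at this
      exact this
    exact (cyc_ne k₀ h2).ne
  · intro v w hv hw
    rw [hinv]
    simp only [Equiv.Perm.mul_apply]
    have hva : cyc a v = v := cyc_of_lt (Fin.lt_def.mpr hv)
    have hwa : cyc a w = w := cyc_of_lt (Fin.lt_def.mpr hw)
    rw [hva, hwa]
    have hA := a.isLt
    have h1 : σ⁻¹ v ≠ k₀ := by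
      intro hc
      have := congrArg σ hc
      rw [(Equiv.Perm.eq_inv_iff_eq.mp rfl), hk₀, (Equiv.Perm.eq_inv_iff_eq.mp rfl)] at this
      rw [this] at hv
      simp only [Fin.val_last] at hv
      omega
    have h2 : σ⁻¹ w ≠ k₀ := by
      intro hc
      have := congrArg σ hc
      rw [(Equiv.Perm.eq_inv_iff_eq.mp rfl), hk₀, (Equiv.Perm.eq_inv_iff_eq.mp rfl)] at this
      rw [this] at hw
      simp only [Fin.val_last] at hw
      omega
    exact cyc_le_iff h1 h2

lemma Kbtr_eq (σ τ : Equiv.Perm (Fin (m+1))) :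
    Kbtr (m+1) σ τ
      = ((Finset.univ.filter fun k : Fin (m+1) => τ = σ * cyc k).card : ℝ) / (m+1) := by
  unfold Kbtr
  rw [Nat.cast_add, Nat.cast_one]
  congr 2
  refine congrArg Finset.card (Finset.filter_congr fun k _ => ?_)
  rw [btr_word]
  constructor
  · intro h; exact (word_injective _ _ h).symm
  · intro h; rw [h]

lemma Kstd_eq (σ τ : Equiv.Perm (Fin (m+1))) :
    Kstd (m+1) σ τ
      = ((Finset.univ.filter fun k : Fin (m+1) =>
          τ = cyc (σ (Fin.last m)) * σ * cyc k).card : ℝ) / (m+1) := by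
  unfold Kstd
  rw [Nat.cast_add, Nat.cast_one]
  congr 2
  refine congrArg Finset.card (Finset.filter_congr fun k _ => ?_)
  rw [std_word]
  constructor
  · intro h; exact (word_injective _ _ h).symm
  · intro h; rw [h]

lemma card_as_sum (P : Fin (m+1) → Prop) [DecidablePred P] :
    (((Finset.univ.filter P).card : ℝ))
      = ∑ k : Fin (m+1), if P k then (1:ℝ) else 0 := by
  rw [Finset.card_filter]
  push_cast
  apply Finset.sum_congr rfl
  intro k _
  split_ifs <;> simp

lemma g_last (σ : Equiv.Perm (Fin (m+1))) (a : Fin (m+1)) :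
    ((cyc a)⁻¹ * σ * (cyc (σ⁻¹ (Fin.last m)))⁻¹) (Fin.last m) = a := by
  simp only [Equiv.Perm.mul_apply]
  have h1 : (cyc (σ⁻¹ (Fin.last m)))⁻¹ (Fin.last m) = σ⁻¹ (Fin.last m) := by
    rw [Equiv.Perm.inv_def, Equiv.symm_apply_eq, cyc_self]
  have h2 : (cyc a)⁻¹ (Fin.last m) = a := by
    rw [Equiv.Perm.inv_def, Equiv.symm_apply_eq, cyc_self]
  rw [h1, (Equiv.Perm.eq_inv_iff_eq.mp rfl), h2]

lemma sum_mul_Kbtr (f : Equiv.Perm (Fin (m+1)) → ℝ) (σ : Equiv.Perm (Fin (m+1))) :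
    ∑ ρ, f ρ * Kbtr (m+1) ρ σ = (∑ k : Fin (m+1), f (σ * (cyc k)⁻¹)) / (m+1) := by
  have step1 : ∀ ρ : Equiv.Perm (Fin (m+1)), f ρ * Kbtr (m+1) ρ σ
      = (∑ k : Fin (m+1), if σ = ρ * cyc k then f ρ else 0) / (m+1) := by
    intro ρ
    rw [Kbtr_eq, card_as_sum, ← mul_div_assoc, Finset.mul_sum]
    congr 1
    apply Finset.sum_congr rfl
    intro k _
    rw [mul_ite, mul_one, mul_zero]
  calc ∑ ρ, f ρ * Kbtr (m+1) ρ σ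
      = ∑ ρ, (∑ k : Fin (m+1), if σ = ρ * cyc k then f ρ else 0) / (m+1) :=
        Finset.sum_congr rfl fun ρ _ => step1 ρ
    _ = (∑ ρ, ∑ k : Fin (m+1), if σ = ρ * cyc k then f ρ else 0) / (m+1) :=
        (Finset.sum_div _ _ _).symm
    _ = (∑ k : Fin (m+1), ∑ ρ, if σ = ρ * cyc k then f ρ else 0) / (m+1) := by
        rw [Finset.sum_comm]
    _ = (∑ k : Fin (m+1), f (σ * (cyc k)⁻¹)) / (m+1) := by
        congr 1
        apply Finset.sum_congr rfl
        intro k _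
        have hiff : ∀ ρ : Equiv.Perm (Fin (m+1)),
            (σ = ρ * cyc k) ↔ (ρ = σ * (cyc k)⁻¹) := by
          intro ρ
          rw [eq_mul_inv_iff_mul_eq, eq_comm]
        calc (∑ ρ, if σ = ρ * cyc k then f ρ else 0)
            = ∑ ρ, if ρ = σ * (cyc k)⁻¹ then f ρ else 0 :=
              Finset.sum_congr rfl fun ρ _ => if_congr (hiff ρ) rfl rfl
          _ = f (σ * (cyc k)⁻¹) := by
              rw [Finset.sum_ite_eq' Finset.univ (σ * (cyc k)⁻¹) f, if_pos (Finset.mem_univ _)]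

lemma sum_mul_Kstd (f : Equiv.Perm (Fin (m+1)) → ℝ) (σ : Equiv.Perm (Fin (m+1))) :
    ∑ ρ, f ρ * Kstd (m+1) ρ σ
      = (∑ a : Fin (m+1), f ((cyc a)⁻¹ * σ * (cyc (σ⁻¹ (Fin.last m)))⁻¹)) / (m+1) := by
  have step1 : ∀ ρ : Equiv.Perm (Fin (m+1)), f ρ * Kstd (m+1) ρ σ
      = (∑ k : Fin (m+1), if σ = cyc (ρ (Fin.last m)) * ρ * cyc k then f ρ else 0) / (m+1) := by
    intro ρ
    rw [Kstd_eq, card_as_sum, ← mul_div_assoc, Finset.mul_sum]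
    congr 1
    apply Finset.sum_congr rfl
    intro k _
    rw [mul_ite, mul_one, mul_zero]
  calc ∑ ρ, f ρ * Kstd (m+1) ρ σ
      = ∑ ρ, (∑ k : Fin (m+1), if σ = cyc (ρ (Fin.last m)) * ρ * cyc k then f ρ else 0) / (m+1) :=
        Finset.sum_congr rfl fun ρ _ => step1 ρ
    _ = (∑ ρ, ∑ k : Fin (m+1), if σ = cyc (ρ (Fin.last m)) * ρ * cyc k then f ρ else 0) / (m+1) :=
        (Finset.sum_div _ _ _).symm
    _ = (∑ k : Fin (m+1), ∑ ρ, if σ = cyc (ρ (Fin.last m)) * ρ * cyc k then f ρ else 0) / (m+1) := by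
        rw [Finset.sum_comm]
    _ = (∑ a : Fin (m+1), f ((cyc a)⁻¹ * σ * (cyc (σ⁻¹ (Fin.last m)))⁻¹)) / (m+1) := by
        congr 1
        rw [Finset.sum_eq_single (σ⁻¹ (Fin.last m))]
        · have hgoalcond : ∀ ρ : Equiv.Perm (Fin (m+1)),
              (σ = cyc (ρ (Fin.last m)) * ρ * cyc (σ⁻¹ (Fin.last m))) ↔
                (∃ a : Fin (m+1), ρ = (cyc a)⁻¹ * σ * (cyc (σ⁻¹ (Fin.last m)))⁻¹) := by
            intro ρ
            constructor
            · intro h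
              refine ⟨ρ (Fin.last m), ?_⟩
              rw [eq_mul_inv_iff_mul_eq, eq_inv_mul_iff_mul_eq, ← mul_assoc]
              exact h.symm
            · rintro ⟨a, rfl⟩
              rw [g_last]
              group
          calc (∑ ρ, if σ = cyc (ρ (Fin.last m)) * ρ * cyc (σ⁻¹ (Fin.last m)) then f ρ else 0)
              = ∑ ρ, if (∃ a : Fin (m+1), ρ = (cyc a)⁻¹ * σ * (cyc (σ⁻¹ (Fin.last m)))⁻¹)
                  then f ρ else 0 :=
                Finset.sum_congr rfl fun ρ _ => if_congr (hgoalcond ρ) rfl rfl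
            _ = ∑ ρ ∈ Finset.univ.filter (fun ρ : Equiv.Perm (Fin (m+1)) =>
                  ∃ a : Fin (m+1), ρ = (cyc a)⁻¹ * σ * (cyc (σ⁻¹ (Fin.last m)))⁻¹), f ρ :=
                (Finset.sum_filter _ _).symm
            _ = ∑ a : Fin (m+1), f ((cyc a)⁻¹ * σ * (cyc (σ⁻¹ (Fin.last m)))⁻¹) := by
                refine Finset.sum_bij' (i := fun ρ _ => ρ (Fin.last m))
                  (j := fun a _ => (cyc a)⁻¹ * σ * (cyc (σ⁻¹ (Fin.last m)))⁻¹)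
                  ?_ ?_ ?_ ?_ ?_
                · intro ρ hρ
                  exact Finset.mem_univ _
                · intro a _
                  simp only [Finset.mem_filter, Finset.mem_univ, true_and]
                  exact ⟨a, rfl⟩
                · intro ρ hρ
                  simp only [Finset.mem_filter, Finset.mem_univ, true_and] at hρ
                  obtain ⟨a, rfl⟩ := hρ
                  simp only [g_last]
                · intro a _
                  simp only [g_last]
                · intro ρ hρ
                  simp only [Finset.mem_filter, Finset.mem_univ, true_and] at hρ
                  obtain ⟨a, rfl⟩ := hρ
                  simp only [g_last]
        · intro k _ hk
          apply Finset.sum_eq_zero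
          intro ρ _
          rw [if_neg]
          intro hc
          apply hk
          have hlk : σ k = Fin.last m := by
            rw [hc]
            simp only [Equiv.Perm.mul_apply, cyc_self]
          rw [← hlk, (Equiv.Perm.inv_eq_iff_eq.mpr rfl)]
        · intro h
          exact absurd (Finset.mem_univ _) h

lemma main (t : ℕ) :
    (∀ σ τ : Equiv.Perm (Fin (m+1)), Mst σ = Mst τ →
      ((Kbtr (m+1)) ^ t) 1 σ = ((Kbtr (m+1)) ^ t) 1 τ)
    ∧ (∀ σ : Equiv.Perm (Fin (m+1)), ((Kstd (m+1)) ^ t) 1 σ = ((Kbtr (m+1)) ^ t) 1 σ) := by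
  induction t with
  | zero =>
    constructor
    · intro σ τ h
      simp only [pow_zero, Matrix.one_apply]
      by_cases hσ : σ = 1
      · have hτ : τ = 1 := by
          rw [← Mst_eq_top_iff] at hσ ⊢
          rw [← h]; exact hσ
        rw [hσ, hτ]
      · have hτ : τ ≠ 1 := by
          intro hc
          apply hσ
          rw [← Mst_eq_top_iff] at hc ⊢
          rw [h]; exact hc
        rw [if_neg (fun hc => hσ hc.symm), if_neg (fun hc => hτ hc.symm)]
    · intro σ
      rw [pow_zero, pow_zero]
  | succ t ih =>
    have hrecb : ∀ σ : Equiv.Perm (Fin (m+1)), ((Kbtr (m+1)) ^ (t+1)) 1 σ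
        = ∑ ρ, ((Kbtr (m+1)) ^ t) 1 ρ * Kbtr (m+1) ρ σ := by
      intro σ; rw [pow_succ, Matrix.mul_apply]
    have hrecs : ∀ σ : Equiv.Perm (Fin (m+1)), ((Kstd (m+1)) ^ (t+1)) 1 σ
        = ∑ ρ, ((Kstd (m+1)) ^ t) 1 ρ * Kstd (m+1) ρ σ := by
      intro σ; rw [pow_succ, Matrix.mul_apply]
    have hB : ∀ σ : Equiv.Perm (Fin (m+1)), ((Kbtr (m+1)) ^ (t+1)) 1 σ
        = (∑ a : Fin (m+1), ((Kbtr (m+1)) ^ t) 1 (σ * (cyc (σ⁻¹ a))⁻¹)) / (m+1) := by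
      intro σ
      rw [hrecb, sum_mul_Kbtr]
      congr 1
      exact (Equiv.sum_comp (σ⁻¹ : Equiv.Perm (Fin (m+1)))
        fun k => ((Kbtr (m+1)) ^ t) 1 (σ * (cyc k)⁻¹)).symm
    constructor
    · intro σ τ h
      rw [hB, hB]
      congr 1
      apply Finset.sum_congr rfl
      intro a _
      apply ih.1
      rw [Mst_mul_cyc_inv, Mst_mul_cyc_inv]
      rw [(Equiv.Perm.eq_inv_iff_eq.mp rfl), (Equiv.Perm.eq_inv_iff_eq.mp rfl), h]
    · intro σ
      rw [hrecs, hB]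
      have step : ∀ ρ : Equiv.Perm (Fin (m+1)),
          ((Kstd (m+1)) ^ t) 1 ρ * Kstd (m+1) ρ σ
            = ((Kbtr (m+1)) ^ t) 1 ρ * Kstd (m+1) ρ σ := by
        intro ρ; rw [ih.2]
      rw [Finset.sum_congr rfl fun ρ _ => step ρ, sum_mul_Kstd]
      congr 1
      apply Finset.sum_congr rfl
      intro a _
      apply ih.1
      rw [Mst_std_preimage, Mst_mul_cyc_inv, (Equiv.Perm.eq_inv_iff_eq.mp rfl)]

end BTR

/-- **Multistep transition probabilities from the identity agree.** For every `n ≥ 1`,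
`t ≥ 0` and `σ ∈ S_n`, the `t`-step transition probability from the identity to `σ` is
the same for the bottom-to-random-with-standardisation chain and for the
bottom-to-random shuffle. -/
theorem bottom_to_random_with_std_eq_bottom_to_random_from_id
    (n : ℕ) (hn : 1 ≤ n) (t : ℕ) (σ : Equiv.Perm (Fin n)) :
    (Kstd n ^ t) 1 σ = (Kbtr n ^ t) 1 σ := by
  obtain ⟨m, rfl⟩ : ∃ m, n = m + 1 := ⟨n - 1, by omega⟩
  exact (BTR.main t).2 σ
end

section
/- For every n ≥ 1, every r with 1 ≤ r ≤ n, and every σ ∈ S_n, a single step of the bottom-r-to-random-with-standardisation chain started at the identity permutation e gives the same distribution as a single step of the bottom-r-to-random shuffle started at e: K_r^std(e,σ) = K_r(e,σ). -/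
/-- The result of a bottom-`r`-to-random shuffle of `σ ∈ S_n` with a given choice
sequence: the last `r` letters of `σ` are removed (keeping their values), then
re-inserted one at a time, the `m`-th insertion (for `m = 0, …, r-1`) inserting the
removed letter selected by the ordering `ρ ∈ S_r` at the position `pos m` of the current
word (which has length `n - r + m`, hence `n - r + m + 1` possible positions). -/
def btrResult (n r : ℕ) (σ : Equiv.Perm (Fin n)) (ρ : Equiv.Perm (Fin r))
    (pos : ∀ m : Fin r, Fin (n - r + (m : ℕ) + 1)) : List ℕ :=
  (List.finRange r).foldl
    (fun cur m => cur.insertIdx ((pos m : ℕ)) (((word n σ).drop (n - r)).getD ((ρ m : ℕ)) 0))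
    ((word n σ).take (n - r))

/-- The bottom-`r`-to-random shuffle transition matrix on `S_n`: `K_r σ τ` is the
probability that the procedure of removing the last `r` letters of `σ` and re-inserting
them one at a time — each time choosing uniformly a not-yet-inserted removed letter and,
independently, a uniformly random position in the current word — yields `τ`, all
`r! · n!/(n-r)!` choice sequences being equally likely. -/
noncomputable def Kbr (n r : ℕ) : Matrix (Equiv.Perm (Fin n)) (Equiv.Perm (Fin n)) ℝ :=
  fun σ τ =>
    ((Finset.univ.filter
        (fun c : Equiv.Perm (Fin r) × (∀ m : Fin r, Fin (n - r + (m : ℕ) + 1)) =>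
          btrResult n r σ c.1 c.2 = word n τ)).card : ℝ)
      / (Fintype.card (Equiv.Perm (Fin r) × (∀ m : Fin r, Fin (n - r + (m : ℕ) + 1))))

/-- Standardisation of a list of distinct naturals: replace its smallest letter by `1`,
its second smallest by `2`, and so on (each letter is replaced by its rank). -/
def stdList (l : List ℕ) : List ℕ :=
  l.map fun j => (l.filter fun x => x ≤ j).length

/-- The result of one step of the bottom-`r`-to-random-with-standardisation procedure on
`σ ∈ S_n` with a given sequence of insertion positions: delete the last `r` letters of
`σ`, standardise the remaining word (making it a permutation of `{1, …, n-r}`), then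
insert the letters `n-r+1, n-r+2, …, n` in this order one at a time, the `m`-th insertion
(for `m = 0, …, r-1`) being at position `pos m` of the current word. -/
def brStdResult (n r : ℕ) (σ : Equiv.Perm (Fin n))
    (pos : ∀ m : Fin r, Fin (n - r + (m : ℕ) + 1)) : List ℕ :=
  (List.finRange r).foldl
    (fun cur m => cur.insertIdx ((pos m : ℕ)) (n - r + (m : ℕ) + 1))
    (stdList ((word n σ).take (n - r)))

/-- The bottom-`r`-to-random-with-standardisation transition matrix on `S_n`:
`K_r^std σ τ` is the probability that the above procedure yields `τ`, all `n!/(n-r)!`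
sequences of insertion positions being equally likely. -/
noncomputable def KbrStd (n r : ℕ) : Matrix (Equiv.Perm (Fin n)) (Equiv.Perm (Fin n)) ℝ :=
  fun σ τ =>
    ((Finset.univ.filter
        (fun pos : ∀ m : Fin r, Fin (n - r + (m : ℕ) + 1) =>
          brStdResult n r σ pos = word n τ)).card : ℝ)
      / (Fintype.card (∀ m : Fin r, Fin (n - r + (m : ℕ) + 1)))

namespace BTRAux

open List

lemma insertIdx_eq_take_cons_drop (l : List ℕ) (i : ℕ) (h : i ≤ l.length) (a : ℕ) :
    l.insertIdx i a = l.take i ++ a :: l.drop i := by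
  induction l generalizing i with
  | nil =>
    obtain rfl := Nat.le_zero.mp h
    simp
  | cons x l ih =>
    cases i with
    | zero => simp
    | succ i => simp [List.insertIdx_succ_cons, ih i (by simpa using h)]

lemma filter_insertIdx (p : ℕ → Bool) (l : List ℕ) (i : ℕ) (h : i ≤ l.length) (a : ℕ)
    (ha : p a = false) : (l.insertIdx i a).filter p = l.filter p := by
  rw [insertIdx_eq_take_cons_drop l i h a, filter_append, filter_cons_of_neg (by simp [ha]),
    ← filter_append, take_append_drop]

lemma indexOf_insertIdx (l : List ℕ) (i : ℕ) (h : i ≤ l.length) (a : ℕ) (ha : a ∉ l) :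
    (l.insertIdx i a).idxOf a = i := by
  rw [insertIdx_eq_take_cons_drop l i h a,
    List.idxOf_append_of_notMem (fun hm => ha (mem_of_mem_take hm)),
    List.idxOf_cons_self, Nat.add_zero, List.length_take, Nat.min_eq_left h]

lemma insertIdx_getElem_eraseIdx (l : List ℕ) (i : ℕ) (h : i < l.length) :
    (l.eraseIdx i).insertIdx i l[i] = l := by
  have hlt : i ≤ (l.take i).length := by simp [List.length_take]; omega
  rw [eraseIdx_eq_take_drop_succ,
    insertIdx_eq_take_cons_drop _ i (by simp [List.length_take, List.length_drop]; omega),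
    take_append_of_le_length hlt, take_take, Nat.min_self,
    drop_append_of_le_length hlt, drop_eq_nil_of_le (by simp [List.length_take]),
    nil_append, getElem_cons_drop, take_append_drop]


def ins (b : ℕ) (base : List ℕ) : (r : ℕ) → (Fin r → ℕ) → (∀ m : Fin r, Fin (b + m + 1)) → List ℕ
  | 0, _, _ => base
  | r + 1, vals, pos =>
      (ins b base r (fun m => vals m.castSucc) (fun m => pos m.castSucc)).insertIdx
        (pos (Fin.last r) : ℕ) (vals (Fin.last r))

def Good (valsL base w : List ℕ) : Prop :=
  w.filter (fun x => decide (x ∉ valsL)) = base ∧ w ~ base ++ valsL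

lemma ins_length {b : ℕ} {base : List ℕ} (hb : base.length = b) :
    ∀ (r : ℕ) (vals : Fin r → ℕ) (pos : ∀ m : Fin r, Fin (b + m + 1)),
      (ins b base r vals pos).length = b + r
  | 0, _, _ => hb
  | r + 1, vals, pos => by
    have hlt : (pos (Fin.last r) : ℕ) ≤ b + r := by
      have := (pos (Fin.last r)).isLt
      simpa using Nat.lt_succ_iff.mp (by simpa using this)
    rw [ins, List.length_insertIdx_of_le_length (by rw [ins_length hb r]; exact hlt) _,
      ins_length hb r, Nat.add_assoc]

lemma mem_ins {b : ℕ} {base : List ℕ} (hb : base.length = b) :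
    ∀ (r : ℕ) (vals : Fin r → ℕ) (pos : ∀ m : Fin r, Fin (b + m + 1)) (x : ℕ),
      x ∈ ins b base r vals pos → x ∈ base ∨ ∃ m, x = vals m
  | 0, _, _, x, hx => Or.inl hx
  | r + 1, vals, pos, x, hx => by
    rw [ins] at hx
    have hlt : (pos (Fin.last r) : ℕ) ≤ (ins b base r (fun m => vals m.castSucc)
        (fun m => pos m.castSucc)).length := by
      rw [ins_length hb r]
      have := (pos (Fin.last r)).isLt
      simpa using Nat.lt_succ_iff.mp (by simpa using this)
    rcases (List.mem_insertIdx hlt).mp hx with h | h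
    · exact Or.inr ⟨Fin.last r, h⟩
    · rcases mem_ins hb r _ _ x h with h' | ⟨m, hm⟩
      · exact Or.inl h'
      · exact Or.inr ⟨m.castSucc, hm⟩

lemma not_mem_ins {b : ℕ} {base : List ℕ} (hb : base.length = b)
    (r : ℕ) (vals : Fin r → ℕ) (pos : ∀ m : Fin r, Fin (b + m + 1)) {v : ℕ}
    (hv1 : v ∉ base) (hv2 : ∀ m, v ≠ vals m) : v ∉ ins b base r vals pos := by
  intro hv
  rcases mem_ins hb r vals pos v hv with h | ⟨m, hm⟩
  · exact hv1 h
  · exact hv2 m hm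


lemma ins_good {b : ℕ} {base : List ℕ} (hb : base.length = b) :
    ∀ (r : ℕ) (vals : Fin r → ℕ), Function.Injective vals → (∀ m, vals m ∉ base) →
      ∀ (pos : ∀ m : Fin r, Fin (b + m + 1)),
        Good (List.ofFn vals) base (ins b base r vals pos) := by
  intro r
  induction r with
  | zero =>
    intro vals _ _ pos
    refine ⟨List.filter_eq_self.mpr (by simp), by simp [ins]⟩
  | succ r ih =>
    intro vals hinj hdis pos
    set vals' : Fin r → ℕ := fun m => vals m.castSucc with hvals'
    set v : ℕ := vals (Fin.last r) with hv
    have hinj' : Function.Injective vals' := hinj.comp (Fin.castSucc_injective r)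
    have hdis' : ∀ m, vals' m ∉ base := fun m => hdis m.castSucc
    have hG : Good (List.ofFn vals') base (ins b base r vals' (fun m => pos m.castSucc)) :=
      ih vals' hinj' hdis' _
    set u := ins b base r vals' (fun m => pos m.castSucc) with hu
    have hulen : u.length = b + r := ins_length hb r _ _
    have hne : ∀ m : Fin r, v ≠ vals' m := by
      intro m hm
      exact absurd (hinj hm) (Fin.castSucc_lt_last m).ne.symm
    have hvu : v ∉ u := not_mem_ins hb r vals' _ (hdis _) hne
    have hile : (pos (Fin.last r) : ℕ) ≤ u.length := by
      rw [hulen]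
      have := (pos (Fin.last r)).isLt
      exact Nat.lt_succ_iff.mp (by simpa using this)
    have hsplit : List.ofFn vals = (List.ofFn vals') ++ [v] := by
      rw [List.ofFn_succ', List.concat_eq_append]
    have hperm : ins b base (r+1) vals pos ~ base ++ List.ofFn vals := by
      show u.insertIdx (pos (Fin.last r) : ℕ) v ~ _
      refine (List.perm_insertIdx v u hile).trans ?_
      rw [hsplit, ← List.append_assoc]
      exact (hG.2.cons v).trans (List.perm_append_singleton v _).symm
    refine ⟨?_, hperm⟩
    show (u.insertIdx (pos (Fin.last r) : ℕ) v).filter _ = base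
    have hvmem : v ∈ List.ofFn vals := by rw [hsplit]; simp
    rw [filter_insertIdx _ u _ hile v (decide_eq_false (not_not_intro hvmem))]
    rw [← hG.1]
    refine List.filter_congr ?_
    intro x hx
    have hxv : x ≠ v := fun hxv => hvu (hxv ▸ hx)
    simp only [decide_eq_decide, hsplit, List.mem_append, List.mem_singleton]
    tauto

lemma ins_exists_unique {b : ℕ} {base : List ℕ} (hb : base.length = b) :
    ∀ (r : ℕ) (vals : Fin r → ℕ), Function.Injective vals → (∀ m, vals m ∉ base) →
      ∀ w : List ℕ, Good (List.ofFn vals) base w →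
        ∃ pos : ∀ m : Fin r, Fin (b + m + 1), ins b base r vals pos = w ∧
          ∀ q : ∀ m : Fin r, Fin (b + m + 1), ins b base r vals q = w → q = pos := by
  intro r
  induction r with
  | zero =>
    intro vals _ _ w hG
    have hw : w = base := by
      have := hG.1
      rwa [List.filter_eq_self.mpr (by simp)] at this
    exact ⟨fun m => m.elim0, hw.symm, fun q _ => funext fun m => m.elim0⟩
  | succ r ih =>
    intro vals hinj hdis w hG
    set vals' : Fin r → ℕ := fun m => vals m.castSucc with hvals'
    set v : ℕ := vals (Fin.last r) with hv
    have hinj' : Function.Injective vals' := hinj.comp (Fin.castSucc_injective r)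
    have hdis' : ∀ m, vals' m ∉ base := fun m => hdis m.castSucc
    have hne : ∀ m : Fin r, v ≠ vals' m := by
      intro m hm
      exact absurd (hinj hm) (Fin.castSucc_lt_last m).ne.symm
    have hsplit : List.ofFn vals = (List.ofFn vals') ++ [v] := by
      rw [List.ofFn_succ', List.concat_eq_append]
    have hvmem : v ∈ List.ofFn vals := by rw [hsplit]; simp
    have hvw : v ∈ w := hG.2.mem_iff.mpr (by rw [hsplit]; simp)
    have hwlen : w.length = b + (r + 1) := by
      rw [hG.2.length_eq]
      simp [hb]
    set i : ℕ := w.idxOf v with hi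
    have hilt : i < w.length := List.idxOf_lt_length_iff.mpr hvw
    have hgetv : w[i] = v := by
      have h2 := List.idxOf_get (h := hilt)
      rw [List.get_eq_getElem] at h2
      exact h2
    set w' : List ℕ := w.eraseIdx i with hw'
    have hrec : w'.insertIdx i v = w := by
      rw [hw', ← hgetv]
      exact insertIdx_getElem_eraseIdx w i hilt
    have hw'len : w'.length = b + r := by
      have h1 : (w.eraseIdx i).length = w.length - 1 := by
        rw [List.length_eraseIdx]
        simp [hilt]
      rw [hw']
      omega
    have hile : i ≤ w'.length := by omega
    have hpermcons : w ~ v :: w' := by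
      rw [← hrec]
      exact List.perm_insertIdx v w' hile
    have hperm' : w' ~ base ++ List.ofFn vals' := by
      have h1 : v :: w' ~ v :: (base ++ List.ofFn vals') := by
        refine hpermcons.symm.trans ?_
        refine hG.2.trans ?_
        rw [hsplit, ← List.append_assoc]
        exact List.perm_append_singleton v _
      exact h1.cons_inv
    have hvw' : v ∉ w' := by
      intro hmem
      have hcount : w.count v = 1 := by
        rw [hG.2.count_eq, List.count_append,
          List.count_eq_zero_of_not_mem (hdis (Fin.last r)),
          List.count_eq_one_of_mem (List.nodup_ofFn.mpr hinj) hvmem]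
      have : (v :: w').count v = 1 := hpermcons.count_eq v ▸ hcount
      rw [List.count_cons_self] at this
      have : w'.count v = 0 := by omega
      exact (List.count_eq_zero.mp this) hmem
    have hGood' : Good (List.ofFn vals') base w' := by
      constructor
      · have h1 : w.filter (fun x => decide (x ∉ List.ofFn vals)) = base := hG.1
        rw [← hrec, filter_insertIdx _ w' i hile v (decide_eq_false (not_not_intro hvmem))] at h1
        rw [← h1]
        refine (List.filter_congr ?_).symm
        intro x hx
        have hxv : x ≠ v := fun hxv => hvw' (hxv ▸ hx)
        simp only [decide_eq_decide, hsplit, List.mem_append, List.mem_singleton]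
        tauto
      · exact hperm'
    obtain ⟨pos', hpos', huniq'⟩ := ih vals' hinj' hdis' w' hGood'
    have hibound : i < b + r + 1 := by omega
    set pos : ∀ m : Fin (r + 1), Fin (b + m + 1) :=
      Fin.lastCases (motive := fun m => Fin (b + m + 1)) ⟨i, hibound⟩ pos' with hposdef
    have hpc : (fun m : Fin r => pos m.castSucc) = pos' := by
      funext m
      simp [hposdef]
    have hins : ins b base (r + 1) vals pos = w := by
      show (ins b base r (fun m => vals m.castSucc) (fun m => pos m.castSucc)).insertIdx
        (pos (Fin.last r) : ℕ) (vals (Fin.last r)) = w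
      rw [hpc]
      have hlast : pos (Fin.last r) = ⟨i, hibound⟩ := by simp [hposdef]
      rw [hlast, hpos']
      exact hrec
    refine ⟨pos, hins, ?_⟩
    intro q hq
    set u := ins b base r (fun m => vals m.castSucc) (fun m => q m.castSucc) with hudef
    have hqw : u.insertIdx (q (Fin.last r) : ℕ) v = w := hq
    have hulen : u.length = b + r := ins_length hb r _ _
    have hjle : (q (Fin.last r) : ℕ) ≤ u.length := by
      rw [hulen]
      have := (q (Fin.last r)).isLt
      exact Nat.lt_succ_iff.mp (by simpa using this)
    have hvu : v ∉ u := not_mem_ins hb r vals' _ (hdis _) hne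
    have hji : (q (Fin.last r) : ℕ) = i := by
      rw [hi, ← hqw, indexOf_insertIdx u _ hjle v hvu]
    have huw' : u = w' := by
      rw [hw', ← hqw, hji, List.eraseIdx_insertIdx_self (i := i) (l := u)]
    have hqc : (fun m : Fin r => q m.castSucc) = pos' := huniq' _ huw'
    funext m
    induction m using Fin.lastCases with
    | last =>
      have hlast : pos (Fin.last r) = ⟨i, hibound⟩ := by simp [hposdef]
      rw [hlast]
      exact Fin.ext hji
    | cast m =>
      exact (congrFun hqc m).trans (congrFun hpc m).symm

lemma card_ins_eq_one {b : ℕ} {base : List ℕ} (hb : base.length = b)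
    (r : ℕ) (vals : Fin r → ℕ) (hinj : Function.Injective vals)
    (hdis : ∀ m, vals m ∉ base) (w : List ℕ) (hG : Good (List.ofFn vals) base w) :
    (Finset.univ.filter
      (fun pos : ∀ m : Fin r, Fin (b + m + 1) => ins b base r vals pos = w)).card = 1 := by
  obtain ⟨p, hp, hu⟩ := ins_exists_unique hb r vals hinj hdis w hG
  rw [Finset.card_eq_one]
  refine ⟨p, ?_⟩
  ext q
  simp only [Finset.mem_filter, Finset.mem_univ, true_and, Finset.mem_singleton]
  exact ⟨hu q, fun h => h ▸ hp⟩

lemma card_ins_eq_zero {b : ℕ} {base : List ℕ} (hb : base.length = b)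
    (r : ℕ) (vals : Fin r → ℕ) (hinj : Function.Injective vals)
    (hdis : ∀ m, vals m ∉ base) (w : List ℕ) (hG : ¬ Good (List.ofFn vals) base w) :
    (Finset.univ.filter
      (fun pos : ∀ m : Fin r, Fin (b + m + 1) => ins b base r vals pos = w)).card = 0 := by
  rw [Finset.card_eq_zero, Finset.filter_eq_empty_iff]
  intro q _ hq
  exact hG (hq ▸ ins_good hb r vals hinj hdis q)

lemma ins_eq_foldl (b : ℕ) (base : List ℕ) :
    ∀ (r : ℕ) (vals : Fin r → ℕ) (pos : ∀ m : Fin r, Fin (b + m + 1)),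
      ins b base r vals pos =
        (List.finRange r).foldl (fun cur m => cur.insertIdx (pos m : ℕ) (vals m)) base
  | 0, _, _ => by simp [ins]
  | r + 1, vals, pos => by
    rw [List.finRange_succ_last, List.foldl_append, List.foldl_map]
    simp only [List.foldl_cons, List.foldl_nil]
    rw [ins, ins_eq_foldl b base r]

lemma card_filter_prod {α β : Type*} [Fintype α] [Fintype β] (p : α → β → Prop)
    [∀ a b, Decidable (p a b)] :
    (Finset.univ.filter (fun c : α × β => p c.1 c.2)).card
      = ∑ a : α, (Finset.univ.filter (fun b => p a b)).card := by
  classical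
  rw [← Fintype.card_subtype]
  rw [Fintype.card_congr (Equiv.subtypeProdEquivSigmaSubtype p), Fintype.card_sigma]
  exact Finset.sum_congr rfl fun a _ => Fintype.card_subtype _


lemma word_one (n : ℕ) : word n 1 = (List.range n).map (· + 1) := by
  apply List.ext_getElem
  · simp [word]
  · intro i h1 h2
    simp [word]

lemma word_one_take (n b : ℕ) (hb : b ≤ n) :
    (word n 1).take b = (List.range b).map (· + 1) := by
  rw [word_one, ← List.map_take, List.take_range, Nat.min_eq_left hb]

lemma range_filter_le (k : ℕ) : ∀ b : ℕ,
    ((List.range b).filter (fun x => decide (x ≤ k))).length = min (k + 1) b := by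
  intro b
  induction b with
  | zero => simp
  | succ b ih =>
    rw [List.range_succ, List.filter_append, List.length_append, ih]
    by_cases hbk : b ≤ k <;> simp [hbk] <;> omega

lemma stdList_base (b : ℕ) :
    stdList ((List.range b).map (· + 1)) = (List.range b).map (· + 1) := by
  apply List.ext_getElem
  · simp [stdList]
  · intro i h1 h2
    simp only [stdList, List.getElem_map, List.getElem_range,
      List.length_map, List.length_range] at h1 h2 ⊢
    rw [List.filter_map, List.length_map]
    have hpred : ((fun x => decide (x ≤ i + 1)) ∘ fun x => x + 1)
        = fun x => decide (x ≤ i) := by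
      funext x
      simp
    rw [hpred, range_filter_le]
    omega

lemma drop_word_getD (n r : ℕ) (hr : 1 ≤ r) (hrn : r ≤ n) (j : ℕ) (hj : j < r) :
    ((word n 1).drop (n - r)).getD j 0 = n - r + j + 1 := by
  have hlen : ((word n 1).drop (n - r)).length = r := by
    simp [word]
    omega
  rw [List.getD_eq_getElem _ _ (by omega)]
  simp [word]

lemma brStd_eq (n r : ℕ) (hrn : r ≤ n) (pos : ∀ m : Fin r, Fin (n - r + (m : ℕ) + 1)) :
    brStdResult n r 1 pos
      = ins (n - r) ((List.range (n - r)).map (· + 1)) r (fun m => n - r + (m : ℕ) + 1) pos := by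
  rw [ins_eq_foldl]
  unfold brStdResult
  rw [word_one_take n (n - r) (by omega), stdList_base]

lemma btr_eq (n r : ℕ) (hr : 1 ≤ r) (hrn : r ≤ n) (ρ : Equiv.Perm (Fin r))
    (pos : ∀ m : Fin r, Fin (n - r + (m : ℕ) + 1)) :
    btrResult n r 1 ρ pos
      = ins (n - r) ((List.range (n - r)).map (· + 1)) r (fun m => n - r + (ρ m : ℕ) + 1) pos := by
  rw [ins_eq_foldl]
  unfold btrResult
  rw [word_one_take n (n - r) (by omega)]
  congr 1
  funext cur m
  rw [drop_word_getD n r hr hrn (ρ m : ℕ) (ρ m).isLt]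

lemma good_iff (b r : ℕ) (ρ : Equiv.Perm (Fin r)) (base w : List ℕ) :
    Good (List.ofFn fun m : Fin r => b + (ρ m : ℕ) + 1) base w ↔
      Good (List.ofFn fun m : Fin r => b + (m : ℕ) + 1) base w := by
  set A : List ℕ := List.ofFn fun m : Fin r => b + (ρ m : ℕ) + 1 with hA
  set B : List ℕ := List.ofFn fun m : Fin r => b + (m : ℕ) + 1 with hB
  have hmem : ∀ x, x ∈ A ↔ x ∈ B := by
    intro x
    simp only [hA, hB, List.mem_ofFn, Set.mem_range]
    constructor
    · rintro ⟨m, rfl⟩; exact ⟨ρ m, rfl⟩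
    · rintro ⟨m, rfl⟩; exact ⟨ρ.symm m, by simp⟩
  have hndA : A.Nodup := List.nodup_ofFn.mpr
    (fun x y h => ρ.injective (Fin.val_injective (by omega)))
  have hndB : B.Nodup := List.nodup_ofFn.mpr
    (fun x y h => Fin.val_injective (by omega))
  have hAB : A ~ B := (List.perm_ext_iff_of_nodup hndA hndB).mpr hmem
  have hfilter : (fun x => decide (x ∉ A)) = (fun x => decide (x ∉ B)) := by
    funext x
    simp only [decide_eq_decide]
    exact not_congr (hmem x)
  constructor <;> rintro ⟨h1, h2⟩
  · exact ⟨hfilter ▸ h1, h2.trans (hAB.append_left base)⟩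
  · exact ⟨hfilter ▸ h1, h2.trans ((hAB.symm).append_left base)⟩

end BTRAux

open BTRAux

/-- **Single steps from the identity agree.** For every `n ≥ 1`, `1 ≤ r ≤ n` and
`σ ∈ S_n`, a single step of the bottom-`r`-to-random-with-standardisation chain started
at the identity gives the same distribution as a single bottom-`r`-to-random shuffle
started at the identity. -/
theorem bottom_r_to_random_with_std_eq_from_id
    (n r : ℕ) (hn : 1 ≤ n) (hr : 1 ≤ r) (hrn : r ≤ n) (σ : Equiv.Perm (Fin n)) :
    KbrStd n r 1 σ = Kbr n r 1 σ := by
  classical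
  have hb : ((List.range (n - r)).map (· + 1)).length = n - r := by simp
  have hdis : ∀ (ρ : Equiv.Perm (Fin r)) (m : Fin r),
      (n - r + (ρ m : ℕ) + 1) ∉ (List.range (n - r)).map (· + 1) := by
    intro ρ m hm
    simp only [List.mem_map, List.mem_range] at hm
    obtain ⟨y, hy, hEq⟩ := hm
    omega
  have hinj : ∀ (ρ : Equiv.Perm (Fin r)),
      Function.Injective (fun m : Fin r => n - r + (ρ m : ℕ) + 1) := by
    intro ρ x y h
    have h2 : n - r + (ρ x : ℕ) + 1 = n - r + (ρ y : ℕ) + 1 := h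
    exact ρ.injective (Fin.val_injective (by omega))
  have hinjStd : Function.Injective (fun m : Fin r => n - r + (m : ℕ) + 1) := by
    intro x y h
    have h2 : n - r + (x : ℕ) + 1 = n - r + (y : ℕ) + 1 := h
    exact Fin.val_injective (by omega)
  have hdisStd : ∀ m : Fin r, (n - r + (m : ℕ) + 1) ∉ (List.range (n - r)).map (· + 1) := by
    intro m hm
    simp only [List.mem_map, List.mem_range] at hm
    obtain ⟨y, hy, hEq⟩ := hm
    omega
  have hstdpred : Finset.univ.filter (fun pos : ∀ m : Fin r, Fin (n - r + (m : ℕ) + 1) =>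
      brStdResult n r 1 pos = word n σ)
      = Finset.univ.filter (fun pos => ins (n - r) ((List.range (n - r)).map (· + 1)) r
          (fun m => n - r + (m : ℕ) + 1) pos = word n σ) :=
    Finset.filter_congr (fun pos _ => by rw [brStd_eq n r hrn pos])
  have hbtrnum : (Finset.univ.filter
      (fun c : Equiv.Perm (Fin r) × (∀ m : Fin r, Fin (n - r + (m : ℕ) + 1)) =>
        btrResult n r 1 c.1 c.2 = word n σ)).card
      = (r).factorial * (Finset.univ.filter
          (fun pos : ∀ m : Fin r, Fin (n - r + (m : ℕ) + 1) =>
            brStdResult n r 1 pos = word n σ)).card := by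
    rw [card_filter_prod (fun ρ pos => btrResult n r 1 ρ pos = word n σ), hstdpred]
    have hterm : ∀ ρ : Equiv.Perm (Fin r),
        (Finset.univ.filter (fun pos : ∀ m : Fin r, Fin (n - r + (m : ℕ) + 1) =>
          btrResult n r 1 ρ pos = word n σ)).card
        = (Finset.univ.filter
            (fun pos : ∀ m : Fin r, Fin (n - r + (m : ℕ) + 1) =>
              ins (n - r) ((List.range (n - r)).map (· + 1)) r
                (fun m => n - r + (m : ℕ) + 1) pos = word n σ)).card := by
      intro ρ
      have hpred : Finset.univ.filter (fun pos : ∀ m : Fin r, Fin (n - r + (m : ℕ) + 1) =>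
          btrResult n r 1 ρ pos = word n σ)
          = Finset.univ.filter (fun pos => ins (n - r) ((List.range (n - r)).map (· + 1)) r
              (fun m => n - r + (ρ m : ℕ) + 1) pos = word n σ) :=
        Finset.filter_congr (fun pos _ => by rw [btr_eq n r hr hrn ρ pos])
      rw [hpred]
      by_cases hG : Good (List.ofFn fun m : Fin r => n - r + (m : ℕ) + 1)
          ((List.range (n - r)).map (· + 1)) (word n σ)
      · rw [card_ins_eq_one hb r _ (hinj ρ) (hdis ρ) _ ((good_iff (n - r) r ρ _ _).mpr hG),
          card_ins_eq_one hb r _ hinjStd hdisStd _ hG]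
      · rw [card_ins_eq_zero hb r _ (hinj ρ) (hdis ρ) _
            (fun h => hG ((good_iff (n - r) r ρ _ _).mp h)),
          card_ins_eq_zero hb r _ hinjStd hdisStd _ hG]
    rw [Finset.sum_congr rfl (fun ρ _ => hterm ρ), Finset.sum_const, Finset.card_univ,
      Fintype.card_perm, Fintype.card_fin, smul_eq_mul]
  have hP : 0 < Fintype.card (∀ m : Fin r, Fin (n - r + (m : ℕ) + 1)) := Fintype.card_pos
  show ((Finset.univ.filter
        (fun pos : ∀ m : Fin r, Fin (n - r + (m : ℕ) + 1) =>
          brStdResult n r 1 pos = word n σ)).card : ℝ)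
      / (Fintype.card (∀ m : Fin r, Fin (n - r + (m : ℕ) + 1))) = _
  rw [Kbr]
  rw [hbtrnum, Fintype.card_prod, Fintype.card_perm, Fintype.card_fin]
  push_cast
  rw [mul_div_mul_left _ _ (by positivity : ((r).factorial : ℝ) ≠ 0)]
end

section
/- For every n ≥ 2, the characteristic polynomial of the bottom-to-random-with-standardisation transition matrix K_std on S_n is (X − 1)·∏_{j=0}^{n−2} (X − j/n)^{m_j}, where m_j = (n−j)! − (n−j−1)! is the number of permutations of {1,…,n} that fix each of 1, 2, …, j but do not fix j+1. In other words, the eigenvalues of this chain are j/n for 0 ≤ j ≤ n with j ≠ n−1, the eigenvalue 1 having multiplicity 1 and the eigenvalue j/n (0 ≤ j ≤ n−2) having multiplicity (n−j)! − (n−j−1)!. -/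
section BTRAux

open Equiv Fin List Polynomial

variable {α : Type*} {n : ℕ}




theorem List.getElem_insertIdx' (l : List α) (x : α) (k j : ℕ) (hk : k ≤ l.length)
    (hj : j < l.length + 1) :
    (l.insertIdx k x)[j]'(by rw [List.length_insertIdx_of_le_length hk]; exact hj) =
      if h : j < k then l[j]'(by omega) else if h' : j = k then x
      else l[j-1]'(by omega) := by
  split_ifs with h h'
  · exact List.getElem_insertIdx_of_lt h (by rw [List.length_insertIdx_of_le_length hk]; omega)
  · subst h'; exact List.getElem_insertIdx_self (by rw [List.length_insertIdx_of_le_length hk]; omega)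
  · have hj' : j = k + (j - k - 1) + 1 := by omega
    have := List.getElem_insertIdx_add_succ l x k (j - k - 1) (by omega)
    convert this using 2 <;> omega

theorem dropLast_insertIdx (l : List α) (x : α) (k : ℕ) (hk : k < l.length) :
    (l.insertIdx k x).dropLast = l.dropLast.insertIdx k x := by
  have hk' : k ≤ l.dropLast.length := by rw [List.length_dropLast]; omega
  apply List.ext_getElem
  · rw [List.length_dropLast, List.length_insertIdx_of_le_length hk.le,
      List.length_insertIdx_of_le_length hk', List.length_dropLast]
    omega
  · intro j h1 h2
    rw [List.getElem_dropLast]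
    rw [List.getElem_insertIdx' l x k j hk.le (by
      rw [List.length_dropLast, List.length_insertIdx_of_le_length hk.le] at h1; omega)]
    rw [List.getElem_insertIdx' l.dropLast x k j hk' (by
      rw [List.length_insertIdx_of_le_length hk', List.length_dropLast] at h2
      rw [List.length_dropLast]; omega)]
    split_ifs with h h'
    · rw [List.getElem_dropLast]
    · rfl
    · rw [List.getElem_dropLast]

theorem map_insertIdx {β : Type*} (f : α → β) (l : List α) (x : α) (k : ℕ) (hk : k ≤ l.length) :
    (l.insertIdx k x).map f = (l.map f).insertIdx k (f x) := by
  apply List.ext_getElem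
  · rw [List.length_map, List.length_insertIdx_of_le_length hk, List.length_insertIdx_of_le_length, List.length_map]
    rwa [List.length_map]
  · intro j h1 h2
    rw [List.getElem_map]
    rw [List.getElem_insertIdx' l x k j hk (by
      rw [List.length_map, List.length_insertIdx_of_le_length hk] at h1; omega)]
    rw [List.getElem_insertIdx' (l.map f) (f x) k j (by rwa [List.length_map]) (by
      rw [List.length_insertIdx_of_le_length (by rwa [List.length_map]), List.length_map] at h2
      rw [List.length_map]; omega)]
    split_ifs with h h'
    · rw [List.getElem_map]
    · rfl
    · rw [List.getElem_map]



/-- insert the maximal value at position `k` -/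
def ins (k : Fin (n + 1)) (π : Equiv.Perm (Fin n)) : Equiv.Perm (Fin (n + 1)) :=
  (finSuccEquiv' k).trans (π.optionCongr.trans (finSuccEquiv' (Fin.last n)).symm)

theorem ins_apply_self (k : Fin (n + 1)) (π : Equiv.Perm (Fin n)) :
    ins k π k = Fin.last n := by
  simp [ins, finSuccEquiv'_at, finSuccEquiv'_symm_none]

theorem ins_apply_succAbove (k : Fin (n + 1)) (π : Equiv.Perm (Fin n)) (p : Fin n) :
    ins k π (k.succAbove p) = (π p).castSucc := by
  simp [ins, finSuccEquiv'_succAbove, finSuccEquiv'_symm_some, Fin.succAbove_last]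

/-- delete the last entry and standardise -/
def fdel (σ : Equiv.Perm (Fin (n + 1))) : Equiv.Perm (Fin n) :=
  Equiv.removeNone ((finSuccEquiv' (Fin.last n)).symm.trans
    (σ.trans (finSuccEquiv' (σ (Fin.last n)))))

theorem fdel_apply (σ : Equiv.Perm (Fin (n + 1))) (p : Fin n) :
    (σ (Fin.last n)).succAbove (fdel σ p) = σ p.castSucc := by
  have h : ((finSuccEquiv' (Fin.last n)).symm.trans
      (σ.trans (finSuccEquiv' (σ (Fin.last n))))) (some p)
      = finSuccEquiv' (σ (Fin.last n)) (σ p.castSucc) := by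
    simp [finSuccEquiv'_symm_some, Fin.succAbove_last]
  have hne : σ p.castSucc ≠ σ (Fin.last n) :=
    fun hc => (Fin.castSucc_lt_last p).ne (σ.injective hc)
  obtain ⟨q, hq⟩ := Fin.exists_succAbove_eq hne
  have h2 : some (fdel σ p) = finSuccEquiv' (σ (Fin.last n)) (σ p.castSucc) := by
    rw [← hq, finSuccEquiv'_succAbove] at h ⊢
    simp only [fdel]
    rw [Equiv.removeNone_some _ ⟨q, h⟩]; exact h
  rw [← hq, finSuccEquiv'_succAbove] at h2
  rw [Option.some_inj.mp h2, hq]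

/-- delete the maximal value -/
def gdel (τ : Equiv.Perm (Fin (n + 1))) : Equiv.Perm (Fin n) :=
  Equiv.removeNone ((finSuccEquiv' (τ⁻¹ (Fin.last n))).symm.trans
    (τ.trans (finSuccEquiv' (Fin.last n))))

theorem gdel_apply (τ : Equiv.Perm (Fin (n + 1))) (p : Fin n) :
    (gdel τ p).castSucc = τ ((τ⁻¹ (Fin.last n)).succAbove p) := by
  have h : ((finSuccEquiv' (τ⁻¹ (Fin.last n))).symm.trans
      (τ.trans (finSuccEquiv' (Fin.last n)))) (some p)
      = finSuccEquiv' (Fin.last n) (τ ((τ⁻¹ (Fin.last n)).succAbove p)) := by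
    simp [finSuccEquiv'_symm_some]
  have hne : τ ((τ⁻¹ (Fin.last n)).succAbove p) ≠ Fin.last n := by
    intro hc
    have h3 := congrArg τ.symm hc
    rw [Equiv.symm_apply_apply] at h3
    exact Fin.succAbove_ne (τ⁻¹ (Fin.last n)) p (by simpa [Equiv.Perm.inv_def] using h3)
  obtain ⟨q, hq⟩ := Fin.exists_succAbove_eq hne
  have h2 : some (gdel τ p) = finSuccEquiv' (Fin.last n) (τ ((τ⁻¹ (Fin.last n)).succAbove p)) := by
    rw [← hq, finSuccEquiv'_succAbove] at h ⊢
    simp only [gdel]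
    rw [Equiv.removeNone_some _ ⟨q, h⟩]; exact h
  rw [← hq, finSuccEquiv'_succAbove] at h2
  rw [Option.some_inj.mp h2, ← hq, Fin.succAbove_last]



theorem word_length (σ : Equiv.Perm (Fin n)) : (word n σ).length = n := by
  simp [word]

theorem word_getElem (σ : Equiv.Perm (Fin n)) (j : ℕ) (hj : j < n) :
    (word n σ)[j]'(by simpa [word_length] using hj) = σ ⟨j, hj⟩ + 1 := by
  simp [word]

theorem word_injective (σ τ : Equiv.Perm (Fin n)) (h : word n σ = word n τ) : σ = τ := by
  have h2 := List.ofFn_injective h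
  ext p
  have h3 : (σ p : ℕ) + 1 = (τ p : ℕ) + 1 := congrFun h2 p
  have h4 : (σ p : ℕ) = (τ p : ℕ) := by omega
  rw [show σ p = τ p from Fin.ext h4]

theorem word_concat (σ : Equiv.Perm (Fin (n + 1))) :
    word (n + 1) σ = (List.ofFn fun p : Fin n => (σ p.castSucc : ℕ) + 1).concat
      ((σ (Fin.last n) : ℕ) + 1) := by
  rw [word, List.ofFn_succ']

theorem word_getLastD (σ : Equiv.Perm (Fin (n + 1))) :
    (word (n + 1) σ).getLastD 0 = (σ (Fin.last n) : ℕ) + 1 := by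
  rw [word_concat]
  simp

theorem word_dropLast (σ : Equiv.Perm (Fin (n + 1))) :
    (word (n + 1) σ).dropLast = List.ofFn fun p : Fin n => (σ p.castSucc : ℕ) + 1 := by
  rw [word_concat, List.concat_eq_append, List.dropLast_concat]
def wstd (n : ℕ) (σ : Equiv.Perm (Fin n)) : List ℕ :=
  (word n σ).dropLast.map fun j => if (word n σ).getLastD 0 < j then j - 1 else j

theorem wstd_eq (σ : Equiv.Perm (Fin (n + 1))) : wstd (n + 1) σ = word n (fdel σ) := by
  rw [wstd, word_dropLast, word_getLastD, List.map_ofFn, word]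
  congr 1
  funext p
  have h := fdel_apply σ p
  simp only [Function.comp_apply]
  rcases lt_or_ge ((fdel σ p).castSucc) (σ (Fin.last n)) with hc | hc
  · rw [Fin.succAbove_of_castSucc_lt _ _ hc] at h
    have hv : (σ p.castSucc : ℕ) = (fdel σ p : ℕ) := by rw [← h]; simp
    have hcc : ¬ ((σ (Fin.last n) : ℕ) + 1 < (σ p.castSucc : ℕ) + 1) := by
      simp only [Fin.lt_def, Fin.coe_castSucc] at hc
      omega
    rw [if_neg hcc, hv]
  · rw [Fin.succAbove_of_le_castSucc _ _ hc] at h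
    have hv : (σ p.castSucc : ℕ) = (fdel σ p : ℕ) + 1 := by rw [← h]; simp
    have : (σ (Fin.last n) : ℕ) + 1 < (σ p.castSucc : ℕ) + 1 := by
      simp only [Fin.le_def, Fin.coe_castSucc] at hc
      omega
    rw [if_pos this, hv]
    omega

theorem word_ins (k : Fin (n + 1)) (π : Equiv.Perm (Fin n)) :
    word (n + 1) (ins k π) = (word n π).insertIdx (k : ℕ) (n + 1) := by
  have hk : (k : ℕ) ≤ (word n π).length := by rw [word_length]; omega
  apply List.ext_getElem
  · rw [word_length, List.length_insertIdx_of_le_length hk, word_length]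
  · intro j h1 h2
    rw [word_length] at h1
    rw [word_getElem _ j h1]
    rw [List.getElem_insertIdx' _ _ _ j hk (by rw [word_length]; omega)]
    split_ifs with h h'
    · have hj' : j < n := by omega
      have hs : (⟨j, h1⟩ : Fin (n + 1)) = k.succAbove ⟨j, hj'⟩ := by
        rw [Fin.succAbove_of_castSucc_lt]
        · rfl
        · simpa [Fin.lt_def] using h
      rw [hs, ins_apply_succAbove, word_getElem _ j hj']
      simp
    · have hkk : (⟨j, h1⟩ : Fin (n + 1)) = k := Fin.ext (by simp [h'])
      rw [hkk, ins_apply_self]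
      simp
    · have hj' : j - 1 < n := by omega
      have hs : (⟨j, h1⟩ : Fin (n + 1)) = k.succAbove ⟨j - 1, hj'⟩ := by
        rw [Fin.succAbove_of_le_castSucc]
        · exact Fin.ext (by simp; omega)
        · simp [Fin.le_def]; omega
      rw [hs, ins_apply_succAbove, word_getElem _ (j - 1) hj']
      simp

theorem ins_inv_last (k : Fin (n + 1)) (π : Equiv.Perm (Fin n)) :
    (ins k π)⁻¹ (Fin.last n) = k := by
  rw [← ins_apply_self k π, Equiv.Perm.inv_def, Equiv.symm_apply_apply]

theorem gdel_ins (k : Fin (n + 1)) (π : Equiv.Perm (Fin n)) : gdel (ins k π) = π := by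
  ext q
  have h := gdel_apply (ins k π) q
  rw [ins_inv_last, ins_apply_succAbove] at h
  exact congrArg Fin.val (Fin.castSucc_injective _ h)

theorem ins_gdel (τ : Equiv.Perm (Fin (n + 1))) : ins (τ⁻¹ (Fin.last n)) (gdel τ) = τ := by
  ext j
  rcases eq_or_ne j (τ⁻¹ (Fin.last n)) with hj | hj
  · subst hj
    rw [ins_apply_self]
    simp
  · obtain ⟨q, hq⟩ := Fin.exists_succAbove_eq hj
    rw [← hq, ins_apply_succAbove, gdel_apply, hq]

theorem key_iff (w : List ℕ) (hw : w.length = n) (τ : Equiv.Perm (Fin (n + 1)))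
    (k : Fin (n + 1)) :
    w.insertIdx (k : ℕ) (n + 1) = word (n + 1) τ ↔
      k = τ⁻¹ (Fin.last n) ∧ w = word n (gdel τ) := by
  constructor
  · intro h
    have hk : (k : ℕ) ≤ w.length := by omega
    have h1 : (w.insertIdx (k : ℕ) (n + 1))[(k : ℕ)]'(by
        rw [List.length_insertIdx_of_le_length hk]; omega) = n + 1 :=
      List.getElem_insertIdx_self (by rw [List.length_insertIdx_of_le_length hk]; omega)
    rw [List.getElem_of_eq h] at h1
    rw [word_getElem _ _ (by omega)] at h1
    simp only [Fin.eta] at h1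
    have hτk : τ k = Fin.last n := Fin.ext (by simp only [Fin.val_last]; omega)
    have hkk : k = τ⁻¹ (Fin.last n) := by
      rw [← hτk, Equiv.Perm.inv_def, Equiv.symm_apply_apply]
    refine ⟨hkk, ?_⟩
    have h2 : word (n + 1) τ = (word n (gdel τ)).insertIdx (k : ℕ) (n + 1) := by
      rw [← word_ins, hkk, ins_gdel]
    rw [h2] at h
    exact List.insertIdx_injective _ _ h
  · rintro ⟨rfl, rfl⟩
    rw [← word_ins, ins_gdel]

theorem Kstd_succ (σ τ : Equiv.Perm (Fin (n + 1))) :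
    Kstd (n + 1) σ τ = (if fdel σ = gdel τ then (1 : ℝ) else 0) / (n + 1) := by
  have hcond : ∀ k : Fin (n + 1),
      (((word (n + 1) σ).dropLast.map fun j =>
          if (word (n + 1) σ).getLastD 0 < j then j - 1 else j).insertIdx (k : ℕ) (n + 1)
        = word (n + 1) τ) ↔ (k = τ⁻¹ (Fin.last n) ∧ fdel σ = gdel τ) := by
    intro k
    have : ((word (n + 1) σ).dropLast.map fun j =>
        if (word (n + 1) σ).getLastD 0 < j then j - 1 else j) = word n (fdel σ) := wstd_eq σ
    rw [this, key_iff _ (word_length _) τ k]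
    constructor
    · rintro ⟨h1, h2⟩; exact ⟨h1, word_injective _ _ h2⟩
    · rintro ⟨h1, h2⟩; exact ⟨h1, by rw [h2]⟩
  rw [Kstd]
  rcases eq_or_ne (fdel σ) (gdel τ) with h | h
  · have : (Finset.univ.filter fun k : Fin (n + 1) =>
        (((word (n + 1) σ).dropLast.map fun j =>
          if (word (n + 1) σ).getLastD 0 < j then j - 1 else j).insertIdx (k : ℕ) (n + 1)
        = word (n + 1) τ)) = {τ⁻¹ (Fin.last n)} := by
      ext k
      simp only [Finset.mem_filter, Finset.mem_univ, true_and, Finset.mem_singleton, hcond k]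
      simp [h]
    rw [this, if_pos h]
    simp
  · have : (Finset.univ.filter fun k : Fin (n + 1) =>
        (((word (n + 1) σ).dropLast.map fun j =>
          if (word (n + 1) σ).getLastD 0 < j then j - 1 else j).insertIdx (k : ℕ) (n + 1)
        = word (n + 1) τ)) = ∅ := by
      ext k
      simp only [Finset.mem_filter, Finset.mem_univ, true_and, Finset.notMem_empty,
        iff_false, hcond k]
      simp [h]
    rw [this, if_neg h]
    simp

noncomputable def Fmat (n : ℕ) :
    Matrix (Equiv.Perm (Fin (n + 1))) (Equiv.Perm (Fin n)) ℝ :=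
  fun σ π => if fdel σ = π then 1 else 0

noncomputable def Gmat (n : ℕ) :
    Matrix (Equiv.Perm (Fin n)) (Equiv.Perm (Fin (n + 1))) ℝ :=
  fun π τ => if gdel τ = π then 1 else 0

theorem KFG : Kstd (n + 1) = (((n : ℝ) + 1)⁻¹) • (Fmat n * Gmat n) := by
  ext σ τ
  rw [Matrix.smul_apply, Matrix.mul_apply]
  rw [Kstd_succ]
  have : ∑ π : Equiv.Perm (Fin n), Fmat n σ π * Gmat n π τ
      = if fdel σ = gdel τ then (1 : ℝ) else 0 := by
    rw [Finset.sum_eq_single (fdel σ)]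
    · simp [Fmat, Gmat, eq_comm]
    · intro π _ hπ
      simp [Fmat, Gmat, Ne.symm hπ]
    · simp
  rw [this, smul_eq_mul]
  push_cast
  ring

theorem fdel_ins_last (π : Equiv.Perm (Fin n)) : fdel (ins (Fin.last n) π) = π := by
  ext p
  have h := fdel_apply (ins (Fin.last n) π) p
  rw [ins_apply_self] at h
  rw [Fin.succAbove_last] at h
  have h2 : (Fin.last n).succAbove p = p.castSucc := by rw [Fin.succAbove_last]
  rw [← h2, ins_apply_succAbove] at h
  exact congrArg Fin.val (Fin.castSucc_injective _ h)

theorem wstd_ins_castSucc {m : ℕ} (k' : Fin (m + 1)) (π : Equiv.Perm (Fin (m + 1))) :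
    wstd (m + 2) (ins k'.castSucc π) = (wstd (m + 1) π).insertIdx (k' : ℕ) (m + 1) := by
  have hlast : ins k'.castSucc π (Fin.last (m + 1)) = (π (Fin.last m)).castSucc := by
    have hsa : (k'.castSucc).succAbove (Fin.last m) = Fin.last (m + 1) := by
      rw [Fin.succAbove_of_le_castSucc _ _ (by
        simpa [Fin.le_def] using Nat.lt_succ_iff.mp k'.isLt), Fin.succ_last]
    rw [← hsa, ins_apply_succAbove]
  have hpivot : (word (m + 2) (ins k'.castSucc π)).getLastD 0
      = (π (Fin.last m) : ℕ) + 1 := by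
    rw [word_getLastD, hlast, Fin.coe_castSucc]
  have hword : word (m + 2) (ins k'.castSucc π)
      = (word (m + 1) π).insertIdx (k' : ℕ) (m + 2) := by
    rw [word_ins]; rfl
  rw [wstd, hpivot, hword]
  rw [dropLast_insertIdx _ _ _ (by rw [word_length]; omega)]
  rw [map_insertIdx _ _ _ _ (by rw [List.length_dropLast, word_length]; omega)]
  have hrel : (if (π (Fin.last m) : ℕ) + 1 < m + 2 then m + 2 - 1 else m + 2) = m + 1 := by
    rw [if_pos (by have := (π (Fin.last m)).isLt; omega)]
    omega
  rw [hrel, wstd, word_getLastD]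

theorem fdel_ins_castSucc_iff {m : ℕ} (k' : Fin (m + 1)) (π ρ : Equiv.Perm (Fin (m + 1))) :
    fdel (ins k'.castSucc π) = ρ ↔
      (wstd (m + 1) π).insertIdx (k' : ℕ) (m + 1) = word (m + 1) ρ := by
  rw [← wstd_ins_castSucc]
  constructor
  · intro h; rw [wstd_eq, h]
  · intro h; exact word_injective _ _ (by rw [← wstd_eq, h])

theorem ins_bijective {m : ℕ} :
    Function.Bijective (fun x : Fin (m + 2) × Equiv.Perm (Fin (m + 1)) => ins x.1 x.2) := by
  constructor
  · rintro ⟨k, π⟩ ⟨k', π'⟩ h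
    simp only at h
    have h1 : k = k' := by rw [← ins_inv_last k π, ← ins_inv_last k' π', h]
    have h2 : π = π' := by rw [← gdel_ins k π, ← gdel_ins k' π', h]
    exact Prod.ext h1 h2
  · intro σ
    exact ⟨(σ⁻¹ (Fin.last (m + 1)), gdel σ), ins_gdel σ⟩

theorem GF {m : ℕ} :
    Gmat (m + 1) * Fmat (m + 1)
      = 1 + (((m : ℝ) + 1)) • Kstd (m + 1) := by
  ext π ρ
  rw [Matrix.mul_apply]
  have hre := Fintype.sum_bijective _ (ins_bijective (m := m))
    (fun x : Fin (m + 2) × Equiv.Perm (Fin (m + 1)) => Gmat (m + 1) π (ins x.1 x.2) *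
      Fmat (m + 1) (ins x.1 x.2) ρ)
    (fun σ => Gmat (m + 1) π σ * Fmat (m + 1) σ ρ) (fun x => rfl)
  rw [← hre]
  rw [Fintype.sum_prod_type]
  have hinner : ∀ k : Fin (m + 2),
      (∑ π' : Equiv.Perm (Fin (m + 1)), Gmat (m + 1) π (ins k π') * Fmat (m + 1) (ins k π') ρ)
      = (if fdel (ins k π) = ρ then (1 : ℝ) else 0) := by
    intro k
    rw [Finset.sum_eq_single π]
    · simp [Gmat, Fmat, gdel_ins]
    · intro π' _ hπ'
      simp [Gmat, Fmat, gdel_ins, hπ', Ne.symm hπ']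
    · simp
  simp_rw [hinner]
  rw [Fin.sum_univ_castSucc]
  have hlastterm : (if fdel (ins (Fin.last (m + 1)) π) = ρ then (1 : ℝ) else 0)
      = (1 : Matrix _ _ ℝ) π ρ := by
    rw [fdel_ins_last, Matrix.one_apply]
  have hsum : (∑ k' : Fin (m + 1), if fdel (ins k'.castSucc π) = ρ then (1 : ℝ) else 0)
      = ((m : ℝ) + 1) * Kstd (m + 1) π ρ := by
    have : ∀ k' : Fin (m + 1), (if fdel (ins k'.castSucc π) = ρ then (1 : ℝ) else 0)
        = (if (wstd (m + 1) π).insertIdx (k' : ℕ) (m + 1) = word (m + 1) ρ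
            then (1 : ℝ) else 0) := by
      intro k'
      simp_rw [fdel_ins_castSucc_iff]
    simp_rw [this]
    rw [Finset.sum_boole, Kstd]
    have hmm : ((m : ℝ) + 1) ≠ 0 := by positivity
    have : ((Finset.univ.filter fun k : Fin (m + 1) =>
        ((word (m + 1) π).dropLast.map fun j =>
          if (word (m + 1) π).getLastD 0 < j then j - 1 else j).insertIdx (k : ℕ) (m + 1)
        = word (m + 1) ρ).card : ℝ)
        = ((Finset.univ.filter fun k : Fin (m + 1) =>
          (wstd (m + 1) π).insertIdx (k : ℕ) (m + 1) = word (m + 1) ρ).card : ℝ) := by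
      rfl
    rw [this]
    push_cast
    field_simp
  rw [hsum, hlastterm, Matrix.add_apply, Matrix.smul_apply, smul_eq_mul]
  ring


variable {I J : Type*} [Fintype I] [Fintype J] [DecidableEq I] [DecidableEq J]

theorem charpoly_map_ringHom {K : Type*} [Field K] (M : Matrix I I ℝ) (φ : ℝ[X] →+* K) :
    φ M.charpoly
      = (Matrix.diagonal (fun _ : I => φ X) - M.map (fun r => φ (C r))).det := by
  rw [Matrix.charpoly, RingHom.map_det]
  congr 1
  ext i j
  by_cases h : i = j <;>
    simp [Matrix.charmatrix_apply, Matrix.map_apply, h, Matrix.diagonal_apply]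

theorem diagonal_const_eq_smul_one {K : Type*} [Field K] (t : K) :
    Matrix.diagonal (fun _ : I => t) = t • (1 : Matrix I I K) := by
  ext i j
  by_cases h : i = j <;> simp [h, Matrix.diagonal_apply, Matrix.one_apply]

set_option synthInstance.maxHeartbeats 1000000 in
set_option maxHeartbeats 1600000 in
theorem charpoly_AB (A : Matrix I J ℝ) (B : Matrix J I ℝ)
    (h : Fintype.card J ≤ Fintype.card I) :
    (A * B).charpoly = X ^ (Fintype.card I - Fintype.card J) * (B * A).charpoly := by
  have hinj : Function.Injective (algebraMap ℝ[X] (RatFunc ℝ)) :=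
    IsFractionRing.injective ℝ[X] (RatFunc ℝ)
  apply hinj
  set φ := algebraMap ℝ[X] (RatFunc ℝ)
  have ht : φ X ≠ 0 := by
    intro h0
    exact Polynomial.X_ne_zero (hinj (by simpa using h0))
  rw [map_mul, map_pow, charpoly_map_ringHom, charpoly_map_ringHom]
  set t := φ X with htdef
  set ψ : ℝ →+* RatFunc ℝ := φ.comp Polynomial.C with hψ
  have hmapf : (fun r : ℝ => φ (C r)) = ⇑ψ := rfl
  rw [hmapf]
  rw [Matrix.map_mul, Matrix.map_mul]
  set A' := A.map ⇑ψ
  set B' := B.map ⇑ψ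
  have key1 : Matrix.diagonal (fun _ : I => t) - A' * B' = t • (1 - t⁻¹ • (A' * B')) := by
    rw [smul_sub, smul_smul, mul_inv_cancel₀ ht, one_smul, diagonal_const_eq_smul_one]
  have key2 : Matrix.diagonal (fun _ : J => t) - B' * A' = t • (1 - t⁻¹ • (B' * A')) := by
    rw [smul_sub, smul_smul, mul_inv_cancel₀ ht, one_smul, diagonal_const_eq_smul_one]
  rw [key1, key2, Matrix.det_smul, Matrix.det_smul]
  have hcomm : (1 - t⁻¹ • (A' * B')).det = (1 - t⁻¹ • (B' * A')).det := by
    have h1 : (1 : Matrix I I (RatFunc ℝ)) - t⁻¹ • (A' * B')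
        = 1 + (-(t⁻¹ • A')) * B' := by
      rw [Matrix.neg_mul, Matrix.smul_mul, sub_eq_add_neg]
    have h2 : (1 : Matrix J J (RatFunc ℝ)) - t⁻¹ • (B' * A')
        = 1 + B' * (-(t⁻¹ • A')) := by
      rw [Matrix.mul_neg, Matrix.mul_smul, sub_eq_add_neg]
    rw [h1, h2, Matrix.det_one_add_mul_comm]
  rw [hcomm]
  rw [← mul_assoc, ← pow_add, Nat.sub_add_cancel h]

theorem charpoly_affine (a b : ℝ) (hb : b ≠ 0) (M : Matrix I I ℝ) :
    (a • (1 : Matrix I I ℝ) + b • M).charpoly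
      = C b ^ (Fintype.card I) * (Polynomial.aeval (C b⁻¹ * ((X : ℝ[X]) - C a)) M.charpoly) := by
  set q : ℝ[X] := C b⁻¹ * ((X : ℝ[X]) - C a) with hq
  have h1 : (Polynomial.aeval q) M.charpoly
      = ((Matrix.charmatrix M).map (Polynomial.aeval q)).det := by
    rw [Matrix.charpoly, AlgHom.map_det, AlgHom.mapMatrix_apply]
  have hmat : Matrix.charmatrix (a • (1 : Matrix I I ℝ) + b • M)
      = C b • ((Matrix.charmatrix M).map (Polynomial.aeval q)) := by
    ext i j : 2
    by_cases h : i = j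
    · subst h
      simp only [Matrix.smul_apply, Matrix.map_apply, Matrix.charmatrix_apply_eq,
        Matrix.add_apply, Matrix.one_apply_eq, smul_eq_mul, map_sub,
        Polynomial.aeval_X, Polynomial.aeval_C, Polynomial.algebraMap_eq, mul_one]
      rw [hq, mul_sub, ← mul_assoc, ← C_mul, mul_inv_cancel₀ hb, C_1, one_mul,
        ← C_mul, sub_sub, ← C_add]
    · simp only [Matrix.smul_apply, Matrix.map_apply, Matrix.charmatrix_apply_ne _ _ _ h,
        Matrix.add_apply, Matrix.one_apply_ne h, smul_eq_mul, map_neg,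
        Polynomial.aeval_C, Polynomial.algebraMap_eq, mul_zero, zero_add, mul_neg, ← C_mul]
  rw [Matrix.charpoly, hmat, Matrix.det_smul, h1]
theorem sum_fact (m : ℕ) :
    ∑ j ∈ Finset.range m, ((m + 1 - j).factorial - (m + 1 - j - 1).factorial)
      = (m + 1).factorial - 1 := by
  induction m with
  | zero => simp
  | succ m ih =>
    rw [Finset.sum_range_succ']
    simp only [show ∀ j : ℕ, m + 1 + 1 - (j + 1) = m + 1 - j from fun j => by omega]
    rw [ih]
    have h1 := Nat.factorial_pos (m + 1)
    have h2 : (m + 1).factorial ≤ (m + 2).factorial := Nat.factorial_le (by omega)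
    have h3 := Nat.factorial_pos (m + 2)
    simp only [Nat.add_sub_cancel_left, Nat.sub_zero,
      show m + 1 + 1 = m + 2 from rfl, show m + 1 + 1 - 1 = m + 1 from rfl]
    omega

theorem Kstd_one : Kstd 1 = (1 : Matrix (Equiv.Perm (Fin 1)) (Equiv.Perm (Fin 1)) ℝ) := by
  ext σ τ
  have hw : ∀ ρ : Equiv.Perm (Fin 1), word 1 ρ = [1] := by
    intro ρ
    rw [word]
    simp [List.ofFn_succ, Subsingleton.elim (ρ 0) 0]
  have hστ : σ = τ := Subsingleton.elim σ τ
  subst hστ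
  rw [Matrix.one_apply_eq, Kstd]
  have : (Finset.univ.filter fun k : Fin 1 =>
      ((word 1 σ).dropLast.map fun j =>
        if (word 1 σ).getLastD 0 < j then j - 1 else j).insertIdx (k : ℕ) 1
      = word 1 σ) = Finset.univ := by
    ext k
    simp only [Finset.mem_filter, Finset.mem_univ, true_and, iff_true]
    rw [hw, show ((k : ℕ)) = 0 from by omega]
    rfl
  rw [this]
  simp

instance : Unique (Equiv.Perm (Fin 1)) :=
  ⟨⟨1⟩, fun σ => Equiv.ext fun x => Subsingleton.elim _ _⟩

theorem charpoly_Kstd_one : (Kstd 1).charpoly = X - C 1 := by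
  rw [Kstd_one, Matrix.charpoly, Matrix.det_unique, Matrix.charmatrix_apply_eq,
    Matrix.one_apply_eq]

theorem main (m : ℕ) : (Kstd (m + 1)).charpoly
    = (X - C 1) * ∏ j ∈ Finset.range m,
        (X - C ((j : ℝ) / ((m : ℝ) + 1)))
          ^ ((m + 1 - j).factorial - (m + 1 - j - 1).factorial) := by
  induction m with
  | zero => rw [charpoly_Kstd_one]; simp
  | succ m ih =>
    have hm2 : ((m : ℝ) + 2) ≠ 0 := by positivity
    have hm1 : ((m : ℝ) + 1) ≠ 0 := by positivity
    have hb : ((m : ℝ) + 1) * ((m : ℝ) + 2)⁻¹ ≠ 0 := by positivity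
    have h1 : Kstd (m + 2) = Fmat (m + 1) * ((((m : ℝ) + 2)⁻¹) • Gmat (m + 1)) := by
      rw [Matrix.mul_smul]
      calc Kstd (m + 2)
          = ((((m + 1 : ℕ) : ℝ)) + 1)⁻¹ • (Fmat (m + 1) * Gmat (m + 1)) := KFG
        _ = (((m : ℝ) + 2)⁻¹) • (Fmat (m + 1) * Gmat (m + 1)) := by
            congr 1
            push_cast
            ring
    have hcard1 : Fintype.card (Equiv.Perm (Fin (m + 1))) = (m + 1).factorial := by
      rw [Fintype.card_perm, Fintype.card_fin]
    have hcard2 : Fintype.card (Equiv.Perm (Fin (m + 2))) = (m + 2).factorial := by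
      rw [Fintype.card_perm, Fintype.card_fin]
    have hle : Fintype.card (Equiv.Perm (Fin (m + 1)))
        ≤ Fintype.card (Equiv.Perm (Fin (m + 2))) := by
      rw [hcard1, hcard2]; exact Nat.factorial_le (by omega)
    have h2 : ((((m : ℝ) + 2)⁻¹) • Gmat (m + 1)) * Fmat (m + 1)
        = (((m : ℝ) + 2)⁻¹) • (1 : Matrix _ _ ℝ)
          + (((m : ℝ) + 1) * ((m : ℝ) + 2)⁻¹) • Kstd (m + 1) := by
      rw [Matrix.smul_mul, GF, smul_add, smul_smul, mul_comm]
    rw [h1, charpoly_AB _ _ hle, h2,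
      charpoly_affine (((m : ℝ) + 2)⁻¹) (((m : ℝ) + 1) * ((m : ℝ) + 2)⁻¹) hb, ih,
      hcard1, hcard2]
    set q : ℝ[X] := C (((m : ℝ) + 1) * ((m : ℝ) + 2)⁻¹)⁻¹
      * ((X : ℝ[X]) - C (((m : ℝ) + 2)⁻¹)) with hqdef
    have hq : ∀ c : ℝ, C (((m : ℝ) + 1) * ((m : ℝ) + 2)⁻¹) * (q - C c)
        = X - C (((m : ℝ) + 2)⁻¹ + (((m : ℝ) + 1) * ((m : ℝ) + 2)⁻¹) * c) := fun c => by
      rw [hqdef, mul_sub, ← mul_assoc, ← C_mul, mul_inv_cancel₀ hb, C_1, one_mul,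
        ← C_mul, sub_sub, ← C_add]
    have haeval : (Polynomial.aeval q) ((X - C 1) * ∏ j ∈ Finset.range m,
          (X - C ((j : ℝ) / ((m : ℝ) + 1)))
            ^ ((m + 1 - j).factorial - (m + 1 - j - 1).factorial))
        = (q - C 1) * ∏ j ∈ Finset.range m,
          (q - C ((j : ℝ) / ((m : ℝ) + 1)))
            ^ ((m + 1 - j).factorial - (m + 1 - j - 1).factorial) := by
      simp only [map_mul, map_prod, map_pow, map_sub, Polynomial.aeval_X,
        Polynomial.aeval_C, Polynomial.algebraMap_eq]
    rw [haeval]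
    have hexp : (m + 1).factorial = (∑ j ∈ Finset.range m,
        ((m + 1 - j).factorial - (m + 1 - j - 1).factorial)) + 1 := by
      have h4 := sum_fact m
      have h5 := Nat.factorial_pos (m + 1)
      omega
    have hpow : C (((m : ℝ) + 1) * ((m : ℝ) + 2)⁻¹) ^ (m + 1).factorial
        = C (((m : ℝ) + 1) * ((m : ℝ) + 2)⁻¹) * ∏ j ∈ Finset.range m,
            C (((m : ℝ) + 1) * ((m : ℝ) + 2)⁻¹)
              ^ ((m + 1 - j).factorial - (m + 1 - j - 1).factorial) := by
      rw [Finset.prod_pow_eq_pow_sum, ← pow_succ']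
      exact congrArg (fun t => C (((m : ℝ) + 1) * ((m : ℝ) + 2)⁻¹) ^ t) hexp
    rw [hpow]
    have hcombine : (C (((m : ℝ) + 1) * ((m : ℝ) + 2)⁻¹) * ∏ j ∈ Finset.range m,
          C (((m : ℝ) + 1) * ((m : ℝ) + 2)⁻¹)
            ^ ((m + 1 - j).factorial - (m + 1 - j - 1).factorial)) *
        ((q - C 1) * ∏ j ∈ Finset.range m,
          (q - C ((j : ℝ) / ((m : ℝ) + 1)))
            ^ ((m + 1 - j).factorial - (m + 1 - j - 1).factorial))
        = (C (((m : ℝ) + 1) * ((m : ℝ) + 2)⁻¹) * (q - C 1)) * ∏ j ∈ Finset.range m,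
          (C (((m : ℝ) + 1) * ((m : ℝ) + 2)⁻¹) * (q - C ((j : ℝ) / ((m : ℝ) + 1))))
            ^ ((m + 1 - j).factorial - (m + 1 - j - 1).factorial) := by
      rw [mul_mul_mul_comm, ← Finset.prod_mul_distrib]
      congr 1
      apply Finset.prod_congr rfl
      intro j _
      rw [mul_pow]
    rw [hcombine, hq 1]
    have hone : (((m : ℝ) + 2)⁻¹ + (((m : ℝ) + 1) * ((m : ℝ) + 2)⁻¹) * 1) = 1 := by
      field_simp
      all_goals ring
    rw [hone]
    have hprod : ∏ j ∈ Finset.range m,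
          (C (((m : ℝ) + 1) * ((m : ℝ) + 2)⁻¹) * (q - C ((j : ℝ) / ((m : ℝ) + 1))))
            ^ ((m + 1 - j).factorial - (m + 1 - j - 1).factorial)
        = ∏ j ∈ Finset.range m,
          ((X : ℝ[X]) - C (((j : ℝ) + 1) / ((m : ℝ) + 2)))
            ^ ((m + 1 - j).factorial - (m + 1 - j - 1).factorial) := by
      apply Finset.prod_congr rfl
      intro j _
      rw [hq]
      congr 2
      field_simp
      all_goals ring
    rw [hprod]
    rw [Finset.prod_range_succ']
    have hfirst : ∀ j ∈ Finset.range m,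
        ((X : ℝ[X]) - C (((j + 1 : ℕ) : ℝ) / (((m + 1 : ℕ) : ℝ) + 1)))
            ^ ((m + 1 + 1 - (j + 1)).factorial - (m + 1 + 1 - (j + 1) - 1).factorial)
        = ((X : ℝ[X]) - C (((j : ℝ) + 1) / ((m : ℝ) + 2)))
            ^ ((m + 1 - j).factorial - (m + 1 - j - 1).factorial) := by
      intro j _
      have hv : (((j + 1 : ℕ) : ℝ) / (((m + 1 : ℕ) : ℝ) + 1))
          = (((j : ℝ) + 1) / ((m : ℝ) + 2)) := by push_cast; ring_nf
      have he : (m + 1 + 1 - (j + 1)).factorial - (m + 1 + 1 - (j + 1) - 1).factorial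
          = (m + 1 - j).factorial - (m + 1 - j - 1).factorial := by
        congr 2 <;> omega
      rw [hv, he]
    rw [Finset.prod_congr rfl hfirst]
    have hzero : ((X : ℝ[X]) - C (((0 : ℕ) : ℝ) / (((m + 1 : ℕ) : ℝ) + 1)))
            ^ ((m + 1 + 1 - 0).factorial - (m + 1 + 1 - 0 - 1).factorial)
        = (X : ℝ[X]) ^ ((m + 2).factorial - (m + 1).factorial) := by
      norm_num
    rw [hzero]
    ring
end BTRAux

open Polynomial in
/-- **Spectrum of the bottom-to-random-with-standardisation chain.** For `n ≥ 2`, the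
characteristic polynomial of `K_std` on `S_n` is
`(X - 1) · ∏_{j=0}^{n-2} (X - j/n)^{(n-j)! - (n-j-1)!}`; that is, the eigenvalues are
`j/n` for `0 ≤ j ≤ n`, `j ≠ n-1`, the eigenvalue `1` with multiplicity `1` and the
eigenvalue `j/n` (for `0 ≤ j ≤ n-2`) with multiplicity `(n-j)! - (n-j-1)!`, the number
of permutations fixing each of `1, …, j` but not `j+1`. -/
theorem bottom_to_random_with_std_charpoly (n : ℕ) (hn : 2 ≤ n) :
    (Kstd n).charpoly
      = (X - C 1) * ∏ j ∈ Finset.range (n - 1),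
          (X - C ((j : ℝ) / (n : ℝ)))
            ^ (Nat.factorial (n - j) - Nat.factorial (n - j - 1)) := by
  obtain ⟨m, rfl⟩ : ∃ m, n = m + 1 := ⟨n - 1, by omega⟩
  rw [main m]
  have hc : ((m + 1 : ℕ) : ℝ) = (m : ℝ) + 1 := by push_cast; ring
  simp only [hc, show m + 1 - 1 = m from rfl]
end
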